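/- arXiv:quant-ph/0108102 — 8 statements merged into one kernel-verified Lean document; each statement's English description precedes it below -/
import Mathlib

section
/- Let H be a finite-dimensional Hilbert space of dimension Ω and let ρ be a density operator on H of rank r. For a family of histories given by sets of projectors σ^(1),...,σ^(n) (each set consisting of mutually orthogonal projectors summing to the identity), with history operators C_α = P^(1)_{α1}···P^(n)_{αn}, if the family satisfies the medium consistency condition Tr{C_α† ρ C_β} = δ_{αβ} Pr(α) for all histories α, β, then the number of histories α with Pr(α) = Tr{C_α† ρ C_α} > 0 is at most rΩ. -/
open Matrix BigOperators
open scoped ComplexOrder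
open scoped MatrixOrder

noncomputable def piSubmoduleEquiv {R : Type*} [Semiring R] {ι : Type*} {M : ι → Type*}
    [∀ i, AddCommMonoid (M i)] [∀ i, Module R (M i)] (p : ∀ i, Submodule R (M i)) :
    (Submodule.pi Set.univ p) ≃ₗ[R] (∀ i, p i) where
  toFun x i := ⟨x.1 i, Submodule.mem_pi.mp x.2 i (Set.mem_univ i)⟩
  map_add' _ _ := rfl
  map_smul' _ _ := rfl
  invFun y := ⟨fun i => (y i).1, Submodule.mem_pi.mpr fun i _ => (y i).2⟩
  left_inv _ := rfl
  right_inv _ := rfl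


/-- The rank-one operator `|v⟩⟨v|`. -/
noncomputable def ketbra {Ω : ℕ} (v : Fin Ω → ℂ) : Matrix (Fin Ω) (Fin Ω) ℂ :=
  Matrix.vecMulVec v (star v)

/-- `P j` is an exhaustive set of mutually exclusive orthogonal projectors:
Hermitian, mutually orthogonal idempotents summing to the identity. -/
def IsProjFamily {Ω n : ℕ} {m : Fin n → ℕ}
    (P : ∀ j : Fin n, Fin (m j) → Matrix (Fin Ω) (Fin Ω) ℂ) : Prop :=
  (∀ j a, (P j a)ᴴ = P j a) ∧
  (∀ j a b, P j a * P j b = if a = b then P j a else 0) ∧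
  (∀ j, ∑ a, P j a = 1)

/-- History operator `C_α = P^(1)_{α1} ⋯ P^(n)_{αn}` (Heisenberg picture). -/
noncomputable def histOp {Ω n : ℕ} {m : Fin n → ℕ}
    (P : ∀ j : Fin n, Fin (m j) → Matrix (Fin Ω) (Fin Ω) ℂ)
    (α : ∀ j, Fin (m j)) : Matrix (Fin Ω) (Fin Ω) ℂ :=
  ((List.finRange n).map fun j => P j (α j)).prod

/-- Coherence function `D(α;β) = Tr{C_α† ρ C_β}`; `Pr(α) = D(α;α)`. -/
noncomputable def coh {Ω n : ℕ} {m : Fin n → ℕ}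
    (ρ : Matrix (Fin Ω) (Fin Ω) ℂ)
    (P : ∀ j : Fin n, Fin (m j) → Matrix (Fin Ω) (Fin Ω) ℂ)
    (α β : ∀ j, Fin (m j)) : ℂ :=
  ((histOp P α)ᴴ * ρ * histOp P β).trace

/-- Diósi's bound.  If the family is medium consistent, the number of
histories with positive probability is at most `r * Ω`, where `r = rank ρ` and
`Ω = dim H`. -/
theorem diosi_bound_medium {Ω n r : ℕ} {m : Fin n → ℕ}
    (ρ : Matrix (Fin Ω) (Fin Ω) ℂ)
    (hρ : ρ.PosSemidef) (hTr : ρ.trace = 1) (hrank : ρ.rank = r)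
    (P : ∀ j : Fin n, Fin (m j) → Matrix (Fin Ω) (Fin Ω) ℂ)
    (hP : IsProjFamily P)
    (hmed : ∀ α β : ∀ j, Fin (m j),
      coh ρ P α β = if α = β then coh ρ P α α else 0) :
    Set.ncard {α : ∀ j, Fin (m j) | 0 < (coh ρ P α α).re} ≤ r * Ω := by
  classical
  set Q := CFC.sqrt ρ with hQdef
  have hQH : Qᴴ = Q := (CFC.sqrt_nonneg ρ).posSemidef.1
  have hQ2 : Q * Q = ρ := CFC.sqrt_mul_sqrt_self ρ hρ.nonneg
  have hQrank : Q.rank = r := by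
    have h := Matrix.rank_conjTranspose_mul_self Q
    rw [hQH, hQ2, hrank] at h
    exact h.symm
  set S := {α : ∀ j, Fin (m j) | 0 < (coh ρ P α α).re} with hSdef
  set v : (∀ j, Fin (m j)) → (Fin Ω → Fin Ω → ℂ) :=
    fun α j => Q.mulVec (fun k => histOp P α k j) with hvdef
  have key : ∀ α β, (∑ j, star (v α j) ⬝ᵥ v β j) = coh ρ P α β := by
    intro α β
    have h1 : coh ρ P α β = ((Q * histOp P α)ᴴ * (Q * histOp P β)).trace := by
      rw [coh, ← hQ2, Matrix.conjTranspose_mul, hQH]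
      simp only [Matrix.mul_assoc]
    rw [h1]
    simp only [Matrix.trace, Matrix.diag, Matrix.mul_apply, Matrix.conjTranspose_apply,
      dotProduct, Pi.star_apply, hvdef, Matrix.mulVec, dotProduct]
  set W : Submodule ℂ (Fin Ω → Fin Ω → ℂ) :=
    Submodule.pi Set.univ (fun _ : Fin Ω => LinearMap.range Q.mulVecLin) with hWdef
  have hvW : ∀ α, v α ∈ W := by
    intro α
    refine Submodule.mem_pi.mpr fun j _ => ⟨fun k => histOp P α k j, ?_⟩
    simp [Matrix.mulVecLin_apply, hvdef]
  have hWrank : Module.finrank ℂ W = Ω * r := by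
    rw [LinearEquiv.finrank_eq (piSubmoduleEquiv _), Module.finrank_pi_fintype]
    calc (∑ _j : Fin Ω, Module.finrank ℂ ↥(LinearMap.range Q.mulVecLin))
        = ∑ _j : Fin Ω, r := Finset.sum_congr rfl fun _ _ => hQrank
      _ = Ω * r := by simp [Finset.sum_const]
  -- linear independence
  have hli : LinearIndependent ℂ (fun α : S => v ↑α) := by
    rw [Fintype.linearIndependent_iff]
    intro g hg β
    set L : (Fin Ω → Fin Ω → ℂ) →ₗ[ℂ] ℂ :=
      { toFun := fun x => ∑ j, star (v (↑β) j) ⬝ᵥ x j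
        map_add' := by
          intro x y
          simp [dotProduct_add, Finset.sum_add_distrib]
        map_smul' := by
          intro c x
          simp [dotProduct_smul, Finset.mul_sum, smul_eq_mul] } with hLdef
    have hL : ∀ γ, L (v γ) = coh ρ P (↑β) γ := fun γ => key (↑β) γ
    have h0 : L (∑ α : S, g α • v ↑α) = 0 := by rw [hg]; exact map_zero L
    have h1 : L (∑ α : S, g α • v ↑α) = ∑ α : S, g α * coh ρ P ↑β ↑α := by
      rw [map_sum]
      refine Finset.sum_congr rfl fun α _ => ?_
      rw [_root_.map_smul, smul_eq_mul, hL]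
    have h2 : (∑ α : S, g α * coh ρ P ↑β ↑α) = g β * coh ρ P ↑β ↑β := by
      rw [Finset.sum_eq_single β]
      · intro α _ hne
        rw [hmed ↑β ↑α, if_neg, mul_zero]
        exact fun h => hne (Subtype.ext h.symm)
      · intro h; exact absurd (Finset.mem_univ β) h
    have hne : coh ρ P ↑β ↑β ≠ 0 := by
      intro h
      have hpos : 0 < (coh ρ P ↑β ↑β).re := β.2
      rw [h] at hpos
      simp at hpos
    have : g β * coh ρ P ↑β ↑β = 0 := by rw [← h2, ← h1, h0]
    exact (mul_eq_zero.mp this).resolve_right hne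
  -- move into W
  have hliW : LinearIndependent ℂ (fun α : S => (⟨v ↑α, hvW ↑α⟩ : W)) :=
    LinearIndependent.of_comp W.subtype hli
  haveI : Fintype ↥S := Fintype.ofFinite _
  calc Set.ncard S = Fintype.card ↥S := by
        rw [← Nat.card_coe_set_eq, Nat.card_eq_fintype_card]
    _ ≤ Module.finrank ℂ W := hliW.fintype_card_le_finrank
    _ = r * Ω := by rw [hWrank, Nat.mul_comm]
end

section
/- Let H be a finite-dimensional Hilbert space of dimension Ω and ρ a density operator of rank r on H. If a family of histories satisfies the weak consistency condition Re[Tr{C_α† ρ C_β}] = δ_{αβ} Pr(α) for all histories α, β in the family, then the number of histories with Pr(α) > 0 is at most 2rΩ. -/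
open Matrix BigOperators
open scoped ComplexOrder

/-- The linear map picking out the `j`-th column of a matrix. -/
def colMap {Ω : ℕ} (j : Fin Ω) :
    Matrix (Fin Ω) (Fin Ω) ℂ →ₗ[ℂ] (Fin Ω → ℂ) where
  toFun M := fun i => M i j
  map_add' _ _ := rfl
  map_smul' _ _ := rfl

set_option maxHeartbeats 1000000 in
/-- Diósi-type bound for weak consistency.  If the family satisfies the
weak consistency condition `Re D(α;β) = δ_{αβ} Pr(α)`, then the number of histories
with positive probability is at most `2 r Ω`. -/
theorem diosi_bound_weak {Ω n r : ℕ} {m : Fin n → ℕ}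
    (ρ : Matrix (Fin Ω) (Fin Ω) ℂ)
    (hρ : ρ.PosSemidef) (hTr : ρ.trace = 1) (hrank : ρ.rank = r)
    (P : ∀ j : Fin n, Fin (m j) → Matrix (Fin Ω) (Fin Ω) ℂ)
    (hP : IsProjFamily P)
    (hweak : ∀ α β : ∀ j, Fin (m j),
      (coh ρ P α β).re = if α = β then (coh ρ P α α).re else 0) :
    Set.ncard {α : ∀ j, Fin (m j) | 0 < (coh ρ P α α).re} ≤ 2 * r * Ω := by
  obtain ⟨B, hBH, hBB⟩ : ∃ B : Matrix (Fin Ω) (Fin Ω) ℂ, Bᴴ = B ∧ B * B = ρ := by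
    open scoped MatrixOrder in
    exact ⟨CFC.sqrt ρ, (CFC.sqrt_nonneg ρ).posSemidef.1, CFC.sqrt_mul_sqrt_self ρ hρ.nonneg⟩
  classical
  have hBrank : B.rank = r := by
    have h := Matrix.rank_conjTranspose_mul_self B
    rw [hBH, hBB, hrank] at h
    exact h.symm
  -- the "square-root history vectors"
  set x : (∀ j, Fin (m j)) → Matrix (Fin Ω) (Fin Ω) ℂ :=
    fun α => B * histOp P α with hxdef
  have key : ∀ α β, ((x α)ᴴ * x β).trace = coh ρ P α β := by
    intro α β
    rw [coh, ← hBB]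
    simp only [hxdef, Matrix.conjTranspose_mul, hBH, Matrix.mul_assoc]
  -- the submodule of matrices of the form B * M
  set W : Submodule ℂ (Fin Ω → ℂ) := LinearMap.range B.mulVecLin with hWdef
  set S : Submodule ℂ (Matrix (Fin Ω) (Fin Ω) ℂ) :=
    LinearMap.range (LinearMap.mulLeft ℂ B) with hSdef
  have hxS : ∀ α, x α ∈ S := fun α => ⟨histOp P α, rfl⟩
  have hWrank : Module.finrank ℂ W = r := hBrank
  -- columns of elements of S lie in W
  have hcol : ∀ M : Matrix (Fin Ω) (Fin Ω) ℂ, M ∈ S → ∀ j : Fin Ω,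
      (fun i => M i j) ∈ W := by
    rintro M ⟨N, rfl⟩ j
    exact ⟨fun k => N k j, rfl⟩
  -- complex dimension of S is at most Ω * r
  have hSrank : Module.finrank ℂ S ≤ Ω * r := by
    let φ : S →ₗ[ℂ] (Fin Ω → W) :=
      LinearMap.pi (fun j => LinearMap.codRestrict W ((colMap j).comp S.subtype)
        (fun M => hcol M.1 M.2 j))
    have hinj : Function.Injective φ := by
      intro a b hab
      apply Subtype.ext
      ext i j
      exact congrArg (fun f => ((f j : W) : Fin Ω → ℂ) i) hab
    calc Module.finrank ℂ S ≤ Module.finrank ℂ (Fin Ω → W) :=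
          LinearMap.finrank_le_finrank_of_injective hinj
      _ = Ω * r := by
          rw [Module.finrank_pi_fintype, Finset.sum_const, hWrank]
          simp [mul_comm]
  -- real dimension of S is 2 * (Ω * r)
  haveI : Module.Finite ℝ S := Module.Finite.trans ℂ S
  have hSrankR : Module.finrank ℝ S ≤ 2 * r * Ω := by
    have h2 : Module.finrank ℝ S = 2 * Module.finrank ℂ S := by
      rw [← Module.finrank_mul_finrank ℝ ℂ S, Complex.finrank_real_complex]
    calc Module.finrank ℝ S = 2 * Module.finrank ℂ S := h2
      _ ≤ 2 * (Ω * r) := Nat.mul_le_mul_left 2 hSrank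
      _ = 2 * r * Ω := by ring
  -- the set of positive-probability histories
  set A : Set (∀ j, Fin (m j)) := {α | 0 < (coh ρ P α α).re} with hAdef
  haveI : Fintype A := Set.Finite.fintype (Set.toFinite _)
  -- the vectors indexed by A, as elements of S
  set u : A → S := fun α => ⟨x α, hxS α⟩ with hudef
  have hli : LinearIndependent ℝ u := by
    rw [Fintype.linearIndependent_iff]
    intro g hg β
    have h0 : (∑ α : A, g α • x ↑α) = (0 : Matrix (Fin Ω) (Fin Ω) ℂ) := by
      simpa [hudef] using congrArg Subtype.val hg
    have h1 : ((x ↑β)ᴴ * ∑ α : A, g α • x ↑α).trace.re = 0 := by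
      rw [h0, Matrix.mul_zero, Matrix.trace_zero]
      simp
    have h2 : ∑ α : A, g α * (((x ↑β)ᴴ * x ↑α).trace.re) = 0 := by
      rw [← h1, Matrix.mul_sum, Matrix.trace_sum, Complex.re_sum]
      refine Finset.sum_congr rfl fun α _ => ?_
      rw [Matrix.mul_smul, Matrix.trace_smul]
      rw [Complex.real_smul, Complex.re_ofReal_mul]
    have h3 : ∑ α : A, g α * (if (β : ∀ j, Fin (m j)) = ↑α then (coh ρ P ↑β ↑β).re else 0) = 0 := by
      calc ∑ α : A, g α * (if (β : ∀ j, Fin (m j)) = ↑α then (coh ρ P ↑β ↑β).re else 0)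
          = ∑ α : A, g α * (((x ↑β)ᴴ * x ↑α).trace.re) :=
            Finset.sum_congr rfl fun α _ => by rw [key ↑β ↑α, hweak ↑β ↑α]
        _ = 0 := h2
    have h4 : g β * (coh ρ P ↑β ↑β).re = 0 := by
      rw [← h3]
      simp only [Subtype.coe_inj]
      rw [Finset.sum_eq_single β]
      · simp
      · intro b _ hb
        simp [Ne.symm hb]
      · simp
    have hpos : 0 < (coh ρ P ↑β ↑β).re := β.2
    exact (mul_eq_zero.mp h4).resolve_right (ne_of_gt hpos)
  have hcard : Fintype.card A ≤ Module.finrank ℝ S :=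
    hli.fintype_card_le_finrank
  calc Set.ncard A = Nat.card A := (Nat.card_coe_set_eq A).symm
    _ = Fintype.card A := Nat.card_eq_fintype_card
    _ ≤ Module.finrank ℝ S := hcard
    _ ≤ 2 * r * Ω := hSrankR
end

section
/- Let ρ = Σ_i λ_i |ψ_i⟩⟨ψ_i| be a density operator, σ^(1) = {|ψ_i⟩⟨ψ_i|} its rank-1 eigenprojector decomposition, and σ^(2) = {|φ_j⟩⟨φ_j|} any rank-1 projector decomposition of the identity. Suppose τ^(1),...,τ^(n) are sets of exhaustive orthogonal projectors such that the extended family S' = {ρ, σ^(1), τ^(1),...,τ^(n), σ^(2)} is medium consistent. Then the extension is trivial: for every pair (i,j) with λ_i |⟨φ_j|ψ_i⟩|² > 0, there is at most one multi-index (α_1,...,α_n) such that the history (i, α_1,...,α_n, j) has nonzero probability. -/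
open Matrix BigOperators
open scoped ComplexOrder

/-- History operator of the extended family
`S' = {ρ, σ⁽¹⁾, τ⁽¹⁾, …, τ⁽ⁿ⁾, σ⁽²⁾}`:
`C = |ψ_i⟩⟨ψ_i| P⁽¹⁾_{α1} ⋯ P⁽ⁿ⁾_{αn} |φ_j⟩⟨φ_j|`. -/
noncomputable def extHistOp {Ω n : ℕ} {m : Fin n → ℕ}
    (ψ φ : Fin Ω → (Fin Ω → ℂ))
    (τ : ∀ j : Fin n, Fin (m j) → Matrix (Fin Ω) (Fin Ω) ℂ)
    (i : Fin Ω) (α : ∀ j, Fin (m j)) (j : Fin Ω) : Matrix (Fin Ω) (Fin Ω) ℂ :=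
  ketbra (ψ i) * histOp τ α * ketbra (φ j)


lemma vecMulVec_mul_mul' {Ω : ℕ} (a b c d : Fin Ω → ℂ) (K : Matrix (Fin Ω) (Fin Ω) ℂ) :
    Matrix.vecMulVec a b * K * Matrix.vecMulVec c d
      = (b ⬝ᵥ (K *ᵥ c)) • Matrix.vecMulVec a d := by
  ext x y
  simp only [Matrix.mul_apply, Matrix.vecMulVec_apply, Matrix.smul_apply, dotProduct,
    Matrix.mulVec, smul_eq_mul, Finset.sum_mul, Finset.mul_sum]
  rw [Finset.sum_comm]
  apply Finset.sum_congr rfl; intros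
  apply Finset.sum_congr rfl; intros
  ring

lemma vecMulVec_conjT {Ω : ℕ} (a b : Fin Ω → ℂ) :
    (Matrix.vecMulVec a b)ᴴ = Matrix.vecMulVec (star b) (star a) := by
  ext x y
  simp [Matrix.conjTranspose_apply, Matrix.vecMulVec_apply, mul_comm]

lemma trace_vecMulVec' {Ω : ℕ} (a b : Fin Ω → ℂ) :
    (Matrix.vecMulVec a b).trace = a ⬝ᵥ b := by
  simp [Matrix.trace, Matrix.diag, Matrix.vecMulVec_apply, dotProduct]

lemma ketbra_mul_mul {Ω : ℕ} (v w : Fin Ω → ℂ) (K : Matrix (Fin Ω) (Fin Ω) ℂ) :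
    ketbra v * K * ketbra w = (star v ⬝ᵥ (K *ᵥ w)) • Matrix.vecMulVec v (star w) :=
  vecMulVec_mul_mul' v (star v) w (star w) K

lemma coh_form {Ω n : ℕ} {m : Fin n → ℕ}
    (ψ φ : Fin Ω → (Fin Ω → ℂ))
    (τ : ∀ j : Fin n, Fin (m j) → Matrix (Fin Ω) (Fin Ω) ℂ)
    (ρ : Matrix (Fin Ω) (Fin Ω) ℂ) (i j : Fin Ω) (α β : ∀ j, Fin (m j)) :
    ((extHistOp ψ φ τ i α j)ᴴ * ρ * extHistOp ψ φ τ i β j).trace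
      = (starRingEnd ℂ) (star (ψ i) ⬝ᵥ (histOp τ α *ᵥ φ j))
        * (star (ψ i) ⬝ᵥ (histOp τ β *ᵥ φ j))
        * ((star (ψ i) ⬝ᵥ (ρ *ᵥ ψ i)) * (φ j ⬝ᵥ star (φ j))) := by
  rw [extHistOp, extHistOp, ketbra_mul_mul, ketbra_mul_mul, Matrix.conjTranspose_smul,
    vecMulVec_conjT, star_star, Matrix.smul_mul, Matrix.smul_mul, Matrix.mul_smul,
    Matrix.trace_smul, Matrix.trace_smul, vecMulVec_mul_mul', Matrix.trace_smul,
    trace_vecMulVec']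
  simp only [smul_eq_mul, RCLike.star_def]
  ring

set_option maxHeartbeats 1000000 in
/-- If interposing projector sets `τ⁽¹⁾,…,τ⁽ⁿ⁾` between the
eigenbasis measurement of `ρ` and an arbitrary final rank-1 measurement yields a
medium-consistent family, the extension is trivial: every original history `(i,j)`
with nonzero probability extends to at most one nonzero-probability history. -/
theorem no_nontrivial_interpolation {Ω n : ℕ} {m : Fin n → ℕ}
    (lam : Fin Ω → ℝ) (ψ φ : Fin Ω → (Fin Ω → ℂ))
    (hψ : ∀ i j, star (ψ i) ⬝ᵥ ψ j = if i = j then 1 else 0)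
    (hφ : ∀ i j, star (φ i) ⬝ᵥ φ j = if i = j then 1 else 0)
    (hlam : ∀ i, 0 ≤ lam i) (hsum : ∑ i, lam i = 1)
    (ρ : Matrix (Fin Ω) (Fin Ω) ℂ)
    (hρ : ρ = ∑ i, (lam i : ℂ) • ketbra (ψ i))
    (τ : ∀ j : Fin n, Fin (m j) → Matrix (Fin Ω) (Fin Ω) ℂ)
    (hτ : IsProjFamily τ)
    (hmed : ∀ (i i' : Fin Ω) (α α' : ∀ j, Fin (m j)) (j j' : Fin Ω),
      ((extHistOp ψ φ τ i α j)ᴴ * ρ * extHistOp ψ φ τ i' α' j').trace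
        = if i = i' ∧ α = α' ∧ j = j' then
            ((extHistOp ψ φ τ i α j)ᴴ * ρ * extHistOp ψ φ τ i α j).trace
          else 0) :
    ∀ (i j : Fin Ω), 0 < lam i * Complex.normSq (star (φ j) ⬝ᵥ ψ i) →
      ∀ α β : ∀ j, Fin (m j),
        ((extHistOp ψ φ τ i α j)ᴴ * ρ * extHistOp ψ φ τ i α j).trace ≠ 0 →
        ((extHistOp ψ φ τ i β j)ᴴ * ρ * extHistOp ψ φ τ i β j).trace ≠ 0 →
        α = β := by
  intro i j _hpos α β hα hβ
  by_contra hne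
  have h0 := hmed i i α β j j
  rw [if_neg (fun h => hne h.2.1)] at h0
  rw [coh_form] at hα hβ h0
  set sα := star (ψ i) ⬝ᵥ (histOp τ α *ᵥ φ j) with hsα
  set sβ := star (ψ i) ⬝ᵥ (histOp τ β *ᵥ φ j) with hsβ
  set t := (star (ψ i) ⬝ᵥ (ρ *ᵥ ψ i)) * (φ j ⬝ᵥ star (φ j)) with ht
  have hsa : sα ≠ 0 := fun h => hα (by rw [h]; ring)
  have hsb : sβ ≠ 0 := fun h => hβ (by rw [h]; ring)
  have htn : t ≠ 0 := fun h => hα (by rw [h]; ring)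
  exact (mul_ne_zero (mul_ne_zero ((map_ne_zero _).mpr hsa) hsb) htn) h0
end

section
/- If a family {|ψ⟩⟨ψ|, σ^(1),...,σ^(n)} with pure initial state |ψ⟩⟨ψ| is computing-consistent, then for every ν ∈ [0,1] the family {ρ, σ^(1),...,σ^(n)} with pseudopure initial state ρ = ((1-ν)/Ω)·1 + ν|ψ⟩⟨ψ| is also computing-consistent, where Ω is the dimension of the Hilbert space. -/
open Matrix BigOperators
open scoped ComplexOrder


section AuxPseudopure
variable {Ω : ℕ}

lemma histOp_cons {n : ℕ} {m : Fin (n + 1) → ℕ}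
    (P : ∀ j : Fin (n + 1), Fin (m j) → Matrix (Fin Ω) (Fin Ω) ℂ)
    (α : ∀ j, Fin (m j)) :
    histOp P α = P 0 (α 0) * histOp (fun j : Fin n => P j.succ) (fun j => α j.succ) := by
  simp [histOp, List.finRange_succ, List.map_map, Function.comp_def]
lemma pi_sum_cons {n : ℕ} {m : Fin (n + 1) → ℕ} {M : Type*} [AddCommMonoid M]
    (f : (∀ j, Fin (m j)) → M) :
    ∑ α : ∀ j, Fin (m j), f α
      = ∑ a : Fin (m 0), ∑ α' : ∀ j : Fin n, Fin (m j.succ), f (Fin.cons a α') := by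
  rw [← Equiv.sum_comp (Fin.consEquiv (fun j => Fin (m j))) f, Fintype.sum_prod_type]
  rfl
lemma IsProjFamily.tail {n : ℕ} {m : Fin (n + 1) → ℕ}
    {P : ∀ j : Fin (n + 1), Fin (m j) → Matrix (Fin Ω) (Fin Ω) ℂ}
    (hP : IsProjFamily P) : IsProjFamily (fun j : Fin n => P j.succ) :=
  ⟨fun _ a => hP.1 _ a, fun _ a b => hP.2.1 _ a b, fun _ => hP.2.2 _⟩

lemma sum_histOp_filter : ∀ {n : ℕ} {m : Fin (n + 1) → ℕ}
    (P : ∀ j : Fin (n + 1), Fin (m j) → Matrix (Fin Ω) (Fin Ω) ℂ),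
    IsProjFamily P → ∀ (k : Fin (m (Fin.last n))),
    ∑ α ∈ Finset.univ.filter (fun α : ∀ j, Fin (m j) => α (Fin.last n) = k),
      histOp P α = P (Fin.last n) k := by
  intro n
  induction n with
  | zero =>
    intro m P hP k
    rw [Finset.sum_filter, pi_sum_cons]
    have h0 : ∀ x : Fin (m 0),
        (Fin.cons x (default : ∀ j : Fin 0, Fin (m j.succ)) : ∀ j, Fin (m j)) (Fin.last 0)
          = x := fun _ => rfl
    simp [histOp, List.finRange_succ, h0]
  | succ n ih =>
    intro m P hP k
    rw [Finset.sum_filter, pi_sum_cons]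
    have key : ∀ (a : Fin (m 0)) (α' : ∀ j : Fin (n+1), Fin (m j.succ)),
        (if (Fin.cons a α' : ∀ j, Fin (m j)) (Fin.last (n+1)) = k then
          histOp P (Fin.cons a α') else 0)
        = P 0 a * (if α' (Fin.last n) = k then
            histOp (fun j : Fin (n+1) => P j.succ) α' else 0) := by
      intro a α'
      have hc : (Fin.cons a α' : ∀ j, Fin (m j)) (Fin.last (n+1)) = α' (Fin.last n) := rfl
      rw [hc]
      by_cases h : α' (Fin.last n) = k
      · simp only [h, if_true]
        rw [histOp_cons, Fin.cons_zero]
        congr 1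
      · simp [h]
    simp only [key, ← Finset.mul_sum]
    have inner : ∀ a : Fin (m 0),
        (∑ α' : ∀ j : Fin (n+1), Fin (m j.succ),
          if α' (Fin.last n) = k then histOp (fun j : Fin (n+1) => P j.succ) α' else 0)
        = P (Fin.last (n+1)) k := by
      intro a
      rw [← Finset.sum_filter]
      exact ih (fun j => P j.succ) hP.tail k
    calc ∑ a : Fin (m 0), P 0 a * _ = ∑ a : Fin (m 0), P 0 a * P (Fin.last (n+1)) k := by
          exact Finset.sum_congr rfl fun a _ => by rw [inner a]
      _ = (∑ a : Fin (m 0), P 0 a) * P (Fin.last (n+1)) k := by rw [Finset.sum_mul]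
      _ = P (Fin.last (n+1)) k := by rw [hP.2.2 0, one_mul]
lemma diag_trace_filter : ∀ {n : ℕ} {m : Fin (n + 1) → ℕ}
    (P : ∀ j : Fin (n + 1), Fin (m j) → Matrix (Fin Ω) (Fin Ω) ℂ),
    IsProjFamily P → ∀ (k : Fin (m (Fin.last n))),
    ∑ α ∈ Finset.univ.filter (fun α : ∀ j, Fin (m j) => α (Fin.last n) = k),
      (histOp P α * (histOp P α)ᴴ).trace = (P (Fin.last n) k).trace := by
  intro n
  induction n with
  | zero =>
    intro m P hP k
    rw [Finset.sum_filter, pi_sum_cons]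
    have h0 : ∀ x : Fin (m 0),
        (Fin.cons x (default : ∀ j : Fin 0, Fin (m j.succ)) : ∀ j, Fin (m j)) (Fin.last 0)
          = x := fun _ => rfl
    have hId : ∀ a : Fin (m 0), P 0 a * P 0 a = P 0 a := fun a => by simp [hP.2.1]
    simp [histOp, List.finRange_succ, h0, hP.1, hId]
  | succ n ih =>
    intro m P hP k
    have hId : ∀ a : Fin (m 0), P 0 a * P 0 a = P 0 a := fun a => by simp [hP.2.1]
    rw [Finset.sum_filter, pi_sum_cons]
    have key : ∀ (a : Fin (m 0)) (α' : ∀ j : Fin (n+1), Fin (m j.succ)),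
        (if (Fin.cons a α' : ∀ j, Fin (m j)) (Fin.last (n+1)) = k then
          (histOp P (Fin.cons a α') * (histOp P (Fin.cons a α'))ᴴ).trace else 0)
        = (if α' (Fin.last n) = k then
            (P 0 a * (histOp (fun j : Fin (n+1) => P j.succ) α'
              * (histOp (fun j : Fin (n+1) => P j.succ) α')ᴴ)).trace else 0) := by
      intro a α'
      have hc : (Fin.cons a α' : ∀ j, Fin (m j)) (Fin.last (n+1)) = α' (Fin.last n) := rfl
      rw [hc]
      by_cases h : α' (Fin.last n) = k
      · simp only [h, if_true]
        have hCons : histOp P (Fin.cons a α')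
            = P 0 a * histOp (fun j : Fin (n+1) => P j.succ) α' := by
          rw [histOp_cons, Fin.cons_zero]
          congr 1
        rw [hCons]
        set C := histOp (fun j : Fin (n+1) => P j.succ) α' with hC
        rw [Matrix.conjTranspose_mul, hP.1 0, ← mul_assoc, Matrix.trace_mul_cycle,
          ← mul_assoc, hId, mul_assoc]
      · simp [h]
    simp only [key]
    rw [Finset.sum_comm]
    have inner : ∀ α' : ∀ j : Fin (n+1), Fin (m j.succ),
        (∑ a : Fin (m 0), if α' (Fin.last n) = k then
          (P 0 a * (histOp (fun j : Fin (n+1) => P j.succ) α'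
            * (histOp (fun j : Fin (n+1) => P j.succ) α')ᴴ)).trace else 0)
        = if α' (Fin.last n) = k then
            (histOp (fun j : Fin (n+1) => P j.succ) α'
              * (histOp (fun j : Fin (n+1) => P j.succ) α')ᴴ).trace else 0 := by
      intro α'
      by_cases h : α' (Fin.last n) = k
      · simp only [h, if_true]
        rw [← Matrix.trace_sum, ← Finset.sum_mul, hP.2.2 0, one_mul]
      · simp [h]
    simp only [inner]
    rw [← Finset.sum_filter]
    exact ih (fun j => P j.succ) hP.tail k

end AuxPseudopure



/-- Computing consistency of the family with initial state `ρ`: for each index `k` of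
the final set of projectors, the sum of the real parts of the off-diagonal coherence
terms over distinct pairs of histories ending in `P⁽ⁿ⁾_k` vanishes.  (The sum over all
ordered distinct pairs equals twice the paper's sum over pairs `β < α`.) -/
def ComputingConsistent {Ω n : ℕ} {m : Fin (n + 1) → ℕ}
    (ρ : Matrix (Fin Ω) (Fin Ω) ℂ)
    (P : ∀ j : Fin (n + 1), Fin (m j) → Matrix (Fin Ω) (Fin Ω) ℂ) : Prop :=
  ∀ k : Fin (m (Fin.last n)),
    ∑ α ∈ Finset.univ.filter
        (fun α : ∀ j, Fin (m j) => α (Fin.last n) = k),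
      ∑ β ∈ Finset.univ.filter
          (fun β : ∀ j, Fin (m j) => β (Fin.last n) = k ∧ β ≠ α),
        (coh ρ P α β).re = 0

/-- If a family with pure initial state `|ψ⟩⟨ψ|` is computing-consistent,
then for every `ν ∈ [0,1]` the same family with pseudopure initial state
`ρ = ((1-ν)/Ω)·1 + ν|ψ⟩⟨ψ|` is also computing-consistent. -/
theorem pseudopure_computing_consistent {Ω n : ℕ} {m : Fin (n + 1) → ℕ}
    (ψ : Fin Ω → ℂ) (hψ : star ψ ⬝ᵥ ψ = 1)
    (P : ∀ j : Fin (n + 1), Fin (m j) → Matrix (Fin Ω) (Fin Ω) ℂ)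
    (hP : IsProjFamily P)
    (hpure : ComputingConsistent (ketbra ψ) P)
    (ν : ℝ) (hν : ν ∈ Set.Icc (0 : ℝ) 1) :
    ComputingConsistent
      ((((1 - ν) / Ω : ℝ) : ℂ) • (1 : Matrix (Fin Ω) (Fin Ω) ℂ)
        + ((ν : ℝ) : ℂ) • ketbra ψ) P := by
  classical
  intro k
  have hfilt : ∀ α : ∀ j, Fin (m j),
      Finset.univ.filter (fun β : ∀ j, Fin (m j) => β (Fin.last n) = k ∧ β ≠ α)
        = (Finset.univ.filter (fun β : ∀ j, Fin (m j) => β (Fin.last n) = k)).erase α := by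
    intro α
    rw [← Finset.filter_filter, Finset.filter_ne']
  have hpureK := hpure k
  simp only [hfilt] at hpureK ⊢
  set F := Finset.univ.filter (fun β : ∀ j, Fin (m j) => β (Fin.last n) = k) with hF
  have hcoh : ∀ α β : ∀ j, Fin (m j),
      coh ((((1 - ν) / Ω : ℝ) : ℂ) • (1 : Matrix (Fin Ω) (Fin Ω) ℂ)
          + ((ν : ℝ) : ℂ) • ketbra ψ) P α β
        = (((1 - ν) / Ω : ℝ) : ℂ) * coh (1 : Matrix (Fin Ω) (Fin Ω) ℂ) P α β
          + ((ν : ℝ) : ℂ) * coh (ketbra ψ) P α β := by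
    intro α β
    simp [coh, Matrix.mul_add, Matrix.add_mul, Matrix.mul_smul, Matrix.smul_mul,
      Matrix.trace_add, Matrix.trace_smul, smul_eq_mul]
  have hre : ∀ α β : ∀ j, Fin (m j),
      (coh ((((1 - ν) / Ω : ℝ) : ℂ) • (1 : Matrix (Fin Ω) (Fin Ω) ℂ)
          + ((ν : ℝ) : ℂ) • ketbra ψ) P α β).re
        = ((1 - ν) / Ω) * (coh (1 : Matrix (Fin Ω) (Fin Ω) ℂ) P α β).re
          + ν * (coh (ketbra ψ) P α β).re := by
    intro α β
    rw [hcoh]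
    simp [Complex.add_re, Complex.mul_re]
  simp only [hre]
  have hone : ∑ α ∈ F, ∑ β ∈ F.erase α, coh (1 : Matrix (Fin Ω) (Fin Ω) ℂ) P α β = 0 := by
    have hsub : ∀ α ∈ F, ∑ β ∈ F.erase α, coh (1 : Matrix (Fin Ω) (Fin Ω) ℂ) P α β
        = (∑ β ∈ F, coh (1 : Matrix (Fin Ω) (Fin Ω) ℂ) P α β)
          - coh (1 : Matrix (Fin Ω) (Fin Ω) ℂ) P α α :=
      fun α hα => Finset.sum_erase_eq_sub hα
    rw [Finset.sum_congr rfl hsub, Finset.sum_sub_distrib]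
    have hcoh1 : ∀ α β : ∀ j, Fin (m j),
        coh (1 : Matrix (Fin Ω) (Fin Ω) ℂ) P α β
          = ((histOp P α)ᴴ * histOp P β).trace := by
      intro α β
      simp [coh]
    have h1 : ∑ α ∈ F, ∑ β ∈ F, coh (1 : Matrix (Fin Ω) (Fin Ω) ℂ) P α β
        = (P (Fin.last n) k).trace := by
      simp only [hcoh1, ← Matrix.trace_sum, ← Finset.mul_sum, ← Finset.sum_mul,
        ← Matrix.conjTranspose_sum]
      rw [hF, sum_histOp_filter P hP k, hP.1]
      have hkk : P (Fin.last n) k * P (Fin.last n) k = P (Fin.last n) k := by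
        simp [hP.2.1]
      rw [hkk]
    have h2 : ∑ α ∈ F, coh (1 : Matrix (Fin Ω) (Fin Ω) ℂ) P α α
        = (P (Fin.last n) k).trace := by
      have : ∀ α : ∀ j, Fin (m j),
          coh (1 : Matrix (Fin Ω) (Fin Ω) ℂ) P α α
            = (histOp P α * (histOp P α)ᴴ).trace := by
        intro α
        rw [hcoh1, Matrix.trace_mul_comm]
      simp only [this]
      rw [hF]
      exact diag_trace_filter P hP k
    rw [h1, h2, sub_self]
  have S1 : ∑ α ∈ F, ∑ β ∈ F.erase α, (coh (1 : Matrix (Fin Ω) (Fin Ω) ℂ) P α β).re = 0 := by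
    have := congrArg Complex.re hone
    simpa [Complex.re_sum] using this
  simp only [Finset.sum_add_distrib, ← Finset.mul_sum]
  rw [S1, hpureK]
  ring
end

section
/- If a family {|ψ⟩⟨ψ|, σ^(1),...,σ^(n)} with pure initial state is medium consistent, then the family with pseudopure initial state ρ = ((1-ν)/Ω)·1 + ν|ψ⟩⟨ψ| satisfies, for any two-event family (n = 2), Tr{P^(2)_{β2} P^(1)_{β1} ρ P^(1)_{α1} P^(2)_{α2}} = ((1-ν)/Ω) δ_{α1β1} δ_{α2β2} Tr{P^(2)_{α2} P^(1)_{α1}} + ν δ_{α2β2} Tr{P^(2)_{α2} P^(1)_{β1} |ψ⟩⟨ψ| P^(1)_{α1}}; in particular the pseudopure family is medium consistent if and only if the pure-state family is. -/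
open Matrix BigOperators
open scoped ComplexOrder

/-- For a two-event family and pseudopure state
`ρ = ((1-ν)/Ω)·1 + ν|ψ⟩⟨ψ|`, the coherence function splits as
`D_ρ(α;β) = ((1-ν)/Ω) δ_{α1β1} δ_{α2β2} Tr{P⁽²⁾_{α2} P⁽¹⁾_{α1}}
  + ν δ_{α2β2} Tr{P⁽²⁾_{α2} P⁽¹⁾_{β1} |ψ⟩⟨ψ| P⁽¹⁾_{α1}}`;
in particular (for `ν > 0`) the pseudopure family is medium consistent iff the
pure-state family is. -/
theorem pseudopure_two_event_decomposition {Ω m₁ m₂ : ℕ} (hΩ : 0 < Ω)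
    (ψ : Fin Ω → ℂ) (hψ : star ψ ⬝ᵥ ψ = 1)
    (P₁ : Fin m₁ → Matrix (Fin Ω) (Fin Ω) ℂ)
    (P₂ : Fin m₂ → Matrix (Fin Ω) (Fin Ω) ℂ)
    (hP₁herm : ∀ a, (P₁ a)ᴴ = P₁ a)
    (hP₂herm : ∀ a, (P₂ a)ᴴ = P₂ a)
    (hP₁orth : ∀ a b, P₁ a * P₁ b = if a = b then P₁ a else 0)
    (hP₂orth : ∀ a b, P₂ a * P₂ b = if a = b then P₂ a else 0)
    (hP₁sum : ∑ a, P₁ a = 1) (hP₂sum : ∑ a, P₂ a = 1)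
    (ν : ℝ) (hν : ν ∈ Set.Icc (0 : ℝ) 1)
    (ρ : Matrix (Fin Ω) (Fin Ω) ℂ)
    (hρ : ρ = (((1 - ν) / Ω : ℝ) : ℂ) • (1 : Matrix (Fin Ω) (Fin Ω) ℂ)
            + ((ν : ℝ) : ℂ) • ketbra ψ) :
    (∀ α₁ β₁ : Fin m₁, ∀ α₂ β₂ : Fin m₂,
      (P₂ β₂ * P₁ β₁ * ρ * P₁ α₁ * P₂ α₂).trace
        = (((1 - ν) / Ω : ℝ) : ℂ)
            * (if α₁ = β₁ ∧ α₂ = β₂ then (P₂ α₂ * P₁ α₁).trace else 0)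
          + ((ν : ℝ) : ℂ)
            * (if α₂ = β₂
                then (P₂ α₂ * P₁ β₁ * ketbra ψ * P₁ α₁).trace else 0))
    ∧ (0 < ν →
      ((∀ α₁ β₁ : Fin m₁, ∀ α₂ β₂ : Fin m₂,
          (P₂ β₂ * P₁ β₁ * ρ * P₁ α₁ * P₂ α₂).trace
            = if α₁ = β₁ ∧ α₂ = β₂
                then (P₂ α₂ * P₁ α₁ * ρ * P₁ α₁ * P₂ α₂).trace else 0)
        ↔
        (∀ α₁ β₁ : Fin m₁, ∀ α₂ β₂ : Fin m₂,
          (P₂ β₂ * P₁ β₁ * ketbra ψ * P₁ α₁ * P₂ α₂).trace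
            = if α₁ = β₁ ∧ α₂ = β₂
                then (P₂ α₂ * P₁ α₁ * ketbra ψ * P₁ α₁ * P₂ α₂).trace
                else 0))) := by
  have hcyc : ∀ (M : Matrix (Fin Ω) (Fin Ω) ℂ) (α₂ β₂ : Fin m₂),
      (P₂ β₂ * M * P₂ α₂).trace = if α₂ = β₂ then (P₂ α₂ * M).trace else 0 := by
    intro M α₂ β₂
    rw [Matrix.trace_mul_comm, ← Matrix.mul_assoc, hP₂orth]
    split <;> simp
  have h1 : ∀ α₁ β₁ : Fin m₁, ∀ α₂ β₂ : Fin m₂,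
      (P₂ β₂ * P₁ β₁ * ρ * P₁ α₁ * P₂ α₂).trace
        = (((1 - ν) / Ω : ℝ) : ℂ)
            * (if α₁ = β₁ ∧ α₂ = β₂ then (P₂ α₂ * P₁ α₁).trace else 0)
          + ((ν : ℝ) : ℂ)
            * (if α₂ = β₂
                then (P₂ α₂ * P₁ β₁ * ketbra ψ * P₁ α₁).trace else 0) := by
    intro α₁ β₁ α₂ β₂
    have e : P₂ β₂ * P₁ β₁ * ρ * P₁ α₁ * P₂ α₂
        = (((1 - ν) / Ω : ℝ) : ℂ) • (P₂ β₂ * (P₁ β₁ * P₁ α₁) * P₂ α₂)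
          + ((ν : ℝ) : ℂ) • (P₂ β₂ * (P₁ β₁ * ketbra ψ * P₁ α₁) * P₂ α₂) := by
      rw [hρ]
      simp only [Matrix.mul_add, Matrix.add_mul, Matrix.mul_smul,
        Matrix.smul_mul, Matrix.mul_one, Matrix.mul_assoc]
    rw [e, Matrix.trace_add, Matrix.trace_smul, Matrix.trace_smul,
      hP₁orth, hcyc, hcyc]
    simp only [smul_eq_mul]
    by_cases h₁ : α₁ = β₁ <;> by_cases h₂ : α₂ = β₂ <;>
      simp [h₁, h₂, eq_comm, Matrix.mul_assoc]
  refine ⟨h1, fun hνpos => ?_⟩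
  have hν0 : ((ν : ℝ) : ℂ) ≠ 0 := by
    exact_mod_cast ne_of_gt hνpos
  have hpure : ∀ α₁ β₁ : Fin m₁, ∀ α₂ β₂ : Fin m₂,
      (P₂ β₂ * P₁ β₁ * ketbra ψ * P₁ α₁ * P₂ α₂).trace
        = if α₂ = β₂ then (P₂ α₂ * P₁ β₁ * ketbra ψ * P₁ α₁).trace else 0 := by
    intro α₁ β₁ α₂ β₂
    have := hcyc (P₁ β₁ * ketbra ψ * P₁ α₁) α₂ β₂
    simpa [Matrix.mul_assoc] using this
  constructor
  · -- pseudopure consistent → pure consistent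
    intro h α₁ β₁ α₂ β₂
    by_cases h₂ : α₂ = β₂
    · subst h₂
      by_cases h₁ : α₁ = β₁
      · subst h₁; simp
      · have hh := h α₁ β₁ α₂ α₂
        rw [h1 α₁ β₁ α₂ α₂] at hh
        simp only [h₁, false_and, and_true, if_false, if_true, mul_zero,
          zero_add] at hh
        have hT : (P₂ α₂ * P₁ β₁ * ketbra ψ * P₁ α₁).trace = 0 :=
          (mul_eq_zero.mp hh).resolve_left hν0
        rw [hpure, if_pos rfl, hT, if_neg (by simp [h₁])]
    · rw [hpure, if_neg h₂, if_neg (by simp [h₂])]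
  · -- pure consistent → pseudopure consistent
    intro h α₁ β₁ α₂ β₂
    rw [h1]
    by_cases h₂ : α₂ = β₂
    · subst h₂
      by_cases h₁ : α₁ = β₁
      · subst h₁
        rw [h1]
        simp
      · have hh := h α₁ β₁ α₂ α₂
        rw [hpure α₁ β₁ α₂ α₂, if_pos rfl, if_neg (by simp [h₁])] at hh
        simp [h₁, hh]
    · simp [h₂]
end

section
/- Classical stochastic simulation of computing-consistent circuits: let |ψ_0⟩ be a unit vector, U_1,...,U_n unitary operators, and for each k = 0,...,n let {|φ^(k)_j⟩} be an orthonormal basis (with {|φ^(n)_i⟩} the final measurement basis), where σ^(k) in the Heisenberg picture is P^(k)_j = (U_k···U_1)† |φ^(k)_j⟩⟨φ^(k)_j| (U_k···U_1). If the family {|ψ_0⟩⟨ψ_0|, σ^(1),...,σ^(n-1)} together with the final measurement is computing-consistent, then |⟨φ^(n)_i| U_n···U_1 |ψ_0⟩|² = Σ_{j_0,...,j_{n-1}} (T_n)_{i,j_{n-1}} ··· (T_1)_{j_1,j_0} |⟨φ^(0)_{j_0}|ψ_0⟩|², where (T_k)_{ij} = |⟨φ^(k)_i| U_k |φ^(k-1)_j⟩|²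 are stochastic matrices. -/
open Matrix BigOperators
open scoped ComplexOrder

/-- `Wop U k = U_{k-1} ⋯ U_1 U_0` : the circuit evolution after the first `k` gates. -/
noncomputable def Wop {Ω n : ℕ} (U : Fin n → Matrix (Fin Ω) (Fin Ω) ℂ) :
    ℕ → Matrix (Fin Ω) (Fin Ω) ℂ
  | 0 => 1
  | k + 1 => (if h : k < n then U ⟨k, h⟩ else 1) * Wop U k

namespace CCSim

variable {Ω : ℕ}

lemma vmv_mul_vmv (a b c d : Fin Ω → ℂ) :
    vecMulVec a b * vecMulVec c d = (b ⬝ᵥ c) • vecMulVec a d := by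
  ext i j
  simp only [Matrix.mul_apply, vecMulVec_apply, Matrix.smul_apply, dotProduct,
    smul_eq_mul, Finset.sum_mul]
  exact Finset.sum_congr rfl fun k _ => by ring

lemma trace_vmv (a b : Fin Ω → ℂ) : (vecMulVec a b).trace = b ⬝ᵥ a := by
  simp [Matrix.trace, Matrix.diag, vecMulVec_apply, dotProduct, mul_comm]

lemma vmv_conjTranspose (a b : Fin Ω → ℂ) :
    (vecMulVec a b)ᴴ = vecMulVec (star b) (star a) := by
  ext i j
  simp [conjTranspose_apply, vecMulVec_apply, mul_comm]

lemma sandwich (A B : Matrix (Fin Ω) (Fin Ω) ℂ) (v w : Fin Ω → ℂ) :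
    A * vecMulVec v w * B = vecMulVec (A *ᵥ v) (w ᵥ* B) := by
  ext i j
  simp only [Matrix.mul_apply, vecMulVec_apply, mulVec, vecMul, dotProduct,
    Finset.sum_mul, Finset.mul_sum]
  refine Finset.sum_congr rfl fun k _ => Finset.sum_congr rfl fun l _ => by ring

lemma conj_dot (a b : Fin Ω → ℂ) :
    (starRingEnd ℂ) (star a ⬝ᵥ b) = star b ⬝ᵥ a := by
  simp only [dotProduct, map_sum]
  refine Finset.sum_congr rfl fun k _ => ?_
  simp [mul_comm]

lemma dot_conjTranspose_mulVec (M : Matrix (Fin Ω) (Fin Ω) ℂ) (x y : Fin Ω → ℂ) :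
    star x ⬝ᵥ (Mᴴ *ᵥ y) = (starRingEnd ℂ) (star y ⬝ᵥ (M *ᵥ x)) := by
  rw [conj_dot, Matrix.dotProduct_mulVec, ← Matrix.star_mulVec]

lemma chain : ∀ (m : ℕ) (v : Fin (m+1) → Fin Ω → ℂ),
    ((List.finRange (m+1)).map fun j => ketbra (v j)).prod
      = (∏ k : Fin m, star (v k.castSucc) ⬝ᵥ v k.succ) •
          vecMulVec (v 0) (star (v (Fin.last m)))
  | 0, v => by
    simp [List.finRange_succ, ketbra, Fin.last]
  | m + 1, v => by
    rw [List.finRange_succ, List.map_cons, List.map_map, List.prod_cons]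
    have IH := chain m (fun k => v k.succ)
    have hmap : ((fun j => ketbra (v j)) ∘ Fin.succ)
        = fun k : Fin (m+1) => ketbra (v k.succ) := rfl
    rw [hmap, IH, mul_smul_comm, ketbra, vmv_mul_vmv, smul_smul,
      Fin.prod_univ_succ, ← Fin.succ_last]
    simp only [Fin.succ_castSucc, Fin.castSucc_zero]
    congr 1
    ring

lemma telescope : ∀ (m : ℕ) (e : Fin (m+1) → Fin Ω → (Fin Ω → ℂ))
    (_ : ∀ (k : Fin (m+1)) (a b : Fin Ω → ℂ),
      ∑ j, (star a ⬝ᵥ e k j) * (star (e k j) ⬝ᵥ b) = star a ⬝ᵥ b)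
    (a : Fin Ω → ℂ) (i : Fin Ω),
    (∑ p : Fin (m+1) → Fin Ω,
      if p (Fin.last m) = i then
        (∏ k : Fin m, star (e k.castSucc (p k.castSucc)) ⬝ᵥ e k.succ (p k.succ))
          * (star a ⬝ᵥ e 0 (p 0))
      else 0) = star a ⬝ᵥ e (Fin.last m) i
  | 0, e, hc, a, i => by
    rw [← Equiv.sum_comp (Equiv.funUnique (Fin 1) (Fin Ω)).symm]
    simp [Fin.last]
  | m + 1, e, hc, a, i => by
    rw [← Equiv.sum_comp (Fin.consEquiv (fun _ : Fin (m+2) => Fin Ω)),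
      Fintype.sum_prod_type]
    simp only [Fin.consEquiv_apply, ← Fin.succ_last, Fin.cons_succ, Fin.cons_zero,
      Fin.prod_univ_succ, Fin.castSucc_zero, ← Fin.succ_castSucc]
    rw [Finset.sum_comm]
    have IH := telescope m (fun k => e k.succ) (fun k => hc k.succ) a i
    rw [← IH]
    refine Finset.sum_congr rfl fun p' _ => ?_
    by_cases hp : p' (Fin.last m) = i
    · simp only [hp, if_true]
      rw [← hc 0 a (e (Fin.succ 0) (p' 0)), Finset.mul_sum]
      exact Finset.sum_congr rfl fun x _ => by ring
    · simp [hp]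

lemma Wop_unitary {n : ℕ} (U : Fin n → Matrix (Fin Ω) (Fin Ω) ℂ)
    (hU : ∀ k, U k ∈ Matrix.unitaryGroup (Fin Ω) ℂ) :
    ∀ k, Wop U k ∈ Matrix.unitaryGroup (Fin Ω) ℂ
  | 0 => one_mem _
  | k + 1 => by
    rw [Wop]
    refine mul_mem ?_ (Wop_unitary U hU k)
    split
    · exact hU _
    · exact one_mem _

end CCSim

open CCSim

/-- classical stochastic simulation of computing-consistent circuits.
The circuit has `n+1` gates `U_k` (acting between times `k` and `k+1`) and an
orthonormal basis `φ k` at each time `k = 0, …, n+1`, the last one being the final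
measurement basis.  The Heisenberg-picture projector at time `k` for outcome `j` is
`P k j = W_k† |φ⁽ᵏ⁾_j⟩⟨φ⁽ᵏ⁾_j| W_k`, and histories pick one outcome at each time.
If the family with initial state `|ψ₀⟩⟨ψ₀|` is computing-consistent, then the final
outcome distribution is reproduced by the classical Markov chain with stochastic
matrices `(T_k)_{ij} = |⟨φ⁽ᵏ⁾_i|U_k|φ⁽ᵏ⁻¹⁾_j⟩|²` applied to the initial distribution
`|⟨φ⁽⁰⁾_j|ψ₀⟩|²`. -/
theorem computing_consistent_stochastic_simulation {Ω n : ℕ}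
    (ψ₀ : Fin Ω → ℂ) (hψ₀ : star ψ₀ ⬝ᵥ ψ₀ = 1)
    (U : Fin (n + 1) → Matrix (Fin Ω) (Fin Ω) ℂ)
    (hU : ∀ k, U k ∈ Matrix.unitaryGroup (Fin Ω) ℂ)
    (φ : Fin (n + 2) → Fin Ω → (Fin Ω → ℂ))
    (hφ : ∀ k i j, star (φ k i) ⬝ᵥ φ k j = if i = j then 1 else 0)
    -- Heisenberg-picture projectors:
    (P : ∀ _ : Fin (n + 2), Fin Ω → Matrix (Fin Ω) (Fin Ω) ℂ)
    (hPdef : ∀ (k : Fin (n + 2)) (j : Fin Ω),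
      P k j = (Wop U k.val)ᴴ * ketbra (φ k j) * Wop U k.val)
    -- computing consistency with the fixed final measurement:
    (hcomp : ∀ i : Fin Ω,
      ∑ p ∈ Finset.univ.filter
          (fun p : Fin (n + 2) → Fin Ω => p (Fin.last (n + 1)) = i),
        ∑ q ∈ Finset.univ.filter
            (fun q : Fin (n + 2) → Fin Ω =>
              q (Fin.last (n + 1)) = i ∧ q ≠ p),
          (((histOp P p)ᴴ * ketbra ψ₀ * histOp P q).trace).re = 0) :
    ∀ i : Fin Ω,
      Complex.normSq
          (star (φ (Fin.last (n + 1)) i) ⬝ᵥ (Wop U (n + 1)).mulVec ψ₀)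
        = ∑ p : Fin (n + 2) → Fin Ω,
            if p (Fin.last (n + 1)) = i then
              (∏ k : Fin (n + 1),
                Complex.normSq
                  (star (φ k.succ (p k.succ)) ⬝ᵥ
                    (U k).mulVec (φ k.castSucc (p k.castSucc))))
                * Complex.normSq (star (φ 0 (p 0)) ⬝ᵥ ψ₀)
            else 0 := by
  intro i
  classical
  -- unitarity facts for Wop
  have hW : ∀ k : ℕ, Wop U k * (Wop U k)ᴴ = 1 := by
    intro k
    have := Wop_unitary U hU k
    rw [Matrix.mem_unitaryGroup_iff] at this
    simpa [Matrix.star_eq_conjTranspose] using this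
  have hW' : ∀ k : ℕ, (Wop U k)ᴴ * Wop U k = 1 := fun k =>
    mul_eq_one_comm.mp (hW k)
  -- the rotated orthonormal bases
  set e : Fin (n+2) → Fin Ω → (Fin Ω → ℂ) :=
    fun k j => (Wop U k.val)ᴴ *ᵥ φ k j with he_def
  have heq : ∀ (k : Fin (n+2)) (j : Fin Ω),
      e k j = (Wop U k.val)ᴴ *ᵥ φ k j := fun _ _ => rfl
  -- P is the rank-one family of the rotated bases
  have hPk : ∀ (k : Fin (n+2)) (j : Fin Ω), P k j = ketbra (e k j) := by
    intro k j
    rw [hPdef, ketbra, sandwich, ketbra, heq]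
    congr 1
    rw [Matrix.star_mulVec, Matrix.conjTranspose_conjTranspose]
  -- dot products of e-vectors reduce to φ dot products
  have hdot1 : ∀ (k : Fin (n+2)) (a : Fin Ω → ℂ) (j : Fin Ω),
      star a ⬝ᵥ e k j = star (Wop U k.val *ᵥ a) ⬝ᵥ φ k j := by
    intro k a j
    rw [heq, Matrix.dotProduct_mulVec, ← Matrix.star_mulVec]
  have hdot2 : ∀ (k : Fin (n+2)) (j : Fin Ω) (b : Fin Ω → ℂ),
      star (e k j) ⬝ᵥ b = star (φ k j) ⬝ᵥ (Wop U k.val *ᵥ b) := by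
    intro k j b
    rw [heq, Matrix.star_mulVec, Matrix.conjTranspose_conjTranspose,
      ← Matrix.dotProduct_mulVec]
  have hWW : ∀ (k : ℕ) (a b : Fin Ω → ℂ),
      star (Wop U k *ᵥ a) ⬝ᵥ (Wop U k *ᵥ b) = star a ⬝ᵥ b := by
    intro k a b
    rw [Matrix.star_mulVec, Matrix.dotProduct_mulVec, Matrix.vecMul_vecMul,
      hW' k, Matrix.vecMul_one]
  -- orthonormality of the e-basis
  have he : ∀ (k : Fin (n+2)) (a b : Fin Ω),
      star (e k a) ⬝ᵥ e k b = if a = b then 1 else 0 := by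
    intro k a b
    rw [hdot2, heq, Matrix.mulVec_mulVec, hW k.val, Matrix.one_mulVec]
    exact hφ k a b
  -- scalar completeness of the φ bases
  have hφc : ∀ (k : Fin (n+2)) (a b : Fin Ω → ℂ),
      ∑ j, (star a ⬝ᵥ φ k j) * (star (φ k j) ⬝ᵥ b) = star a ⬝ᵥ b := by
    intro k a b
    set M : Matrix (Fin Ω) (Fin Ω) ℂ := Matrix.of (fun j x => φ k j x) with hM
    have hMM : M * Mᴴ = 1 := by
      ext x y
      have h := hφ k y x
      rw [dotProduct] at h
      simp only [Matrix.mul_apply, Matrix.conjTranspose_apply, hM, Matrix.of_apply,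
        Matrix.one_apply]
      rw [show (if x = y then (1:ℂ) else 0) = if y = x then 1 else 0 by
        by_cases hxy : x = y <;> simp [hxy, Ne.symm, eq_comm], ← h]
      exact Finset.sum_congr rfl fun j _ => by simp [mul_comm]
    have hNM : Mᴴ * M = 1 := mul_eq_one_comm.mp hMM
    have h1 : ∀ j, star a ⬝ᵥ φ k j = (M *ᵥ star a) j := by
      intro j
      simp [Matrix.mulVec, dotProduct, hM, mul_comm]
    have h2 : ∀ j, star (φ k j) ⬝ᵥ b = (b ᵥ* Mᴴ) j := by
      intro j
      simp [Matrix.vecMul, dotProduct, Matrix.conjTranspose_apply, hM, mul_comm]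
    calc ∑ j, (star a ⬝ᵥ φ k j) * (star (φ k j) ⬝ᵥ b)
        = ∑ j, (b ᵥ* Mᴴ) j * (M *ᵥ star a) j := by
          refine Finset.sum_congr rfl fun j _ => ?_
          rw [h1, h2]; ring
      _ = (b ᵥ* Mᴴ) ⬝ᵥ (M *ᵥ star a) := rfl
      _ = ((b ᵥ* Mᴴ) ᵥ* M) ⬝ᵥ star a := by rw [Matrix.dotProduct_mulVec]
      _ = (b ᵥ* (Mᴴ * M)) ⬝ᵥ star a := by rw [Matrix.vecMul_vecMul]
      _ = b ⬝ᵥ star a := by rw [hNM, Matrix.vecMul_one]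
      _ = star a ⬝ᵥ b := dotProduct_comm _ _
  -- scalar completeness of the e bases
  have hec : ∀ (k : Fin (n+2)) (a b : Fin Ω → ℂ),
      ∑ j, (star a ⬝ᵥ e k j) * (star (e k j) ⬝ᵥ b) = star a ⬝ᵥ b := by
    intro k a b
    calc ∑ j, (star a ⬝ᵥ e k j) * (star (e k j) ⬝ᵥ b)
        = ∑ j, (star (Wop U k.val *ᵥ a) ⬝ᵥ φ k j) *
            (star (φ k j) ⬝ᵥ (Wop U k.val *ᵥ b)) := by
          refine Finset.sum_congr rfl fun j _ => ?_
          rw [hdot1, hdot2]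
      _ = star (Wop U k.val *ᵥ a) ⬝ᵥ (Wop U k.val *ᵥ b) := hφc k _ _
      _ = star a ⬝ᵥ b := hWW k.val a b
  -- the amplitude of a history
  set A : (Fin (n+2) → Fin Ω) → ℂ := fun p =>
    ∏ k : Fin (n+1), star (e k.castSucc (p k.castSucc)) ⬝ᵥ e k.succ (p k.succ)
    with hA
  set B : (Fin (n+2) → Fin Ω) → ℂ := fun p =>
    A p * (star ψ₀ ⬝ᵥ e 0 (p 0)) with hB
  -- history operators are rank one
  have hhist : ∀ p : Fin (n+2) → Fin Ω,
      histOp P p = A p • vecMulVec (e 0 (p 0))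
        (star (e (Fin.last (n+1)) (p (Fin.last (n+1))))) := by
    intro p
    rw [histOp]
    have hm : (fun j : Fin (n+2) => P j (p j)) = fun j => ketbra (e j (p j)) :=
      funext fun j => hPk j (p j)
    rw [hm]
    exact chain (n+1) (fun k => e k (p k))
  -- the coherence functional
  have hD : ∀ p q : Fin (n+2) → Fin Ω,
      ((histOp P p)ᴴ * ketbra ψ₀ * histOp P q).trace
        = (starRingEnd ℂ) (B p) * B q *
          (if q (Fin.last (n+1)) = p (Fin.last (n+1)) then 1 else 0) := by
    intro p q
    rw [hhist p, hhist q, Matrix.conjTranspose_smul, vmv_conjTranspose, star_star,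
      ketbra, smul_mul_assoc, smul_mul_assoc, mul_smul_comm,
      vmv_mul_vmv, smul_mul_assoc, vmv_mul_vmv]
    rw [Matrix.trace_smul, Matrix.trace_smul, Matrix.trace_smul, Matrix.trace_smul,
      trace_vmv, he]
    rw [hB]
    simp only [_root_.map_mul, smul_eq_mul, RCLike.star_def]
    rw [conj_dot]
    ring
  -- the filtered index set
  set F : Finset (Fin (n+2) → Fin Ω) :=
    Finset.univ.filter (fun p => p (Fin.last (n+1)) = i) with hF
  -- the total amplitude for outcome i
  have hs : ∑ p ∈ F, B p = star ψ₀ ⬝ᵥ e (Fin.last (n+1)) i := by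
    rw [hF, Finset.sum_filter]
    exact telescope (n+1) e hec ψ₀ i
  -- consistency kills the cross terms
  have hfilter : ∀ p, Finset.univ.filter
      (fun q : Fin (n + 2) → Fin Ω => q (Fin.last (n + 1)) = i ∧ q ≠ p)
        = F.erase p := by
    intro p
    ext q
    simp [hF, Finset.mem_erase, and_comm]
  have hcross : ∑ p ∈ F, ∑ q ∈ F.erase p,
      ((starRingEnd ℂ) (B p) * B q).re = 0 := by
    have h := hcomp i
    rw [← hF] at h
    calc ∑ p ∈ F, ∑ q ∈ F.erase p, ((starRingEnd ℂ) (B p) * B q).re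
        = ∑ p ∈ F, ∑ q ∈ F.erase p,
            (((histOp P p)ᴴ * ketbra ψ₀ * histOp P q).trace).re := by
          refine Finset.sum_congr rfl fun p hp => Finset.sum_congr rfl fun q hq => ?_
          have hpl : p (Fin.last (n+1)) = i := by
            rw [hF] at hp; exact (Finset.mem_filter.mp hp).2
          have hql : q (Fin.last (n+1)) = i := by
            have := (Finset.mem_erase.mp hq).2
            rw [hF] at this; exact (Finset.mem_filter.mp this).2
          rw [hD p q, hql, hpl, if_pos rfl, mul_one]
      _ = 0 := by rw [← h]; exact Finset.sum_congr rfl fun p _ => by rw [hfilter p]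
  -- the key probability identity
  have hkey : Complex.normSq (∑ p ∈ F, B p) = ∑ p ∈ F, Complex.normSq (B p) := by
    have hns : ∀ z : ℂ, Complex.normSq z = ((starRingEnd ℂ) z * z).re := by
      intro z
      rw [mul_comm, Complex.mul_conj, Complex.ofReal_re]
    rw [hns, map_sum, Finset.sum_mul_sum]
    rw [Complex.re_sum]
    have : ∀ p ∈ F, (∑ q ∈ F, (starRingEnd ℂ) (B p) * B q).re
        = Complex.normSq (B p) + ∑ q ∈ F.erase p, ((starRingEnd ℂ) (B p) * B q).re := by
      intro p hp
      rw [Complex.re_sum, ← Finset.add_sum_erase _ _ hp, hns]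
    rw [Finset.sum_congr rfl this, Finset.sum_add_distrib, hcross, add_zero]
  -- identify the left-hand side
  have hlhs : Complex.normSq
      (star (φ (Fin.last (n + 1)) i) ⬝ᵥ (Wop U (n + 1)).mulVec ψ₀)
        = Complex.normSq (∑ p ∈ F, B p) := by
    rw [hs, hdot1, Fin.val_last, ← conj_dot, Complex.normSq_conj]
  rw [hlhs, hkey]
  -- identify the right-hand side
  rw [show (∑ p : Fin (n + 2) → Fin Ω,
      if p (Fin.last (n + 1)) = i then
        (∏ k : Fin (n + 1), Complex.normSq (star (φ k.succ (p k.succ)) ⬝ᵥ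
          (U k).mulVec (φ k.castSucc (p k.castSucc))))
          * Complex.normSq (star (φ 0 (p 0)) ⬝ᵥ ψ₀) else 0)
    = ∑ p ∈ F, (∏ k : Fin (n + 1), Complex.normSq (star (φ k.succ (p k.succ)) ⬝ᵥ
          (U k).mulVec (φ k.castSucc (p k.castSucc))))
          * Complex.normSq (star (φ 0 (p 0)) ⬝ᵥ ψ₀) from by
      rw [hF, Finset.sum_filter]]
  refine Finset.sum_congr rfl fun p _ => ?_
  -- pointwise identification of probabilities
  have he0 : ∀ j, e 0 j = φ 0 j := by
    intro j
    rw [heq]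
    show (Wop U 0)ᴴ *ᵥ φ 0 j = φ 0 j
    rw [Wop]
    simp
  have hstep : ∀ (k : Fin (n+1)) (a b : Fin Ω),
      star (e k.castSucc a) ⬝ᵥ e k.succ b
        = (starRingEnd ℂ) (star (φ k.succ b) ⬝ᵥ (U k) *ᵥ φ k.castSucc a) := by
    intro k a b
    rw [hdot2, heq, Matrix.mulVec_mulVec, Fin.coe_castSucc, Fin.val_succ]
    have hWU : Wop U k.val * (Wop U (k.val+1))ᴴ = (U k)ᴴ := by
      rw [show Wop U (k.val+1) = U k * Wop U k.val from by
        show (if h : k.val < n + 1 then U ⟨k.val, h⟩ else 1) * Wop U k.val = _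
        rw [dif_pos k.isLt, Fin.eta]]
      rw [Matrix.conjTranspose_mul, ← Matrix.mul_assoc, hW k.val, Matrix.one_mul]
    rw [hWU, dot_conjTranspose_mulVec]
  rw [hB]
  simp only [_root_.map_mul]
  rw [he0, ← conj_dot, Complex.normSq_conj, hA]
  simp only [map_prod]
  congr 1
  refine Finset.prod_congr rfl fun k _ => ?_
  rw [hstep, Complex.normSq_conj]
end

section
/- Explicit family achieving the Diósi bound: let ρ = Σ_{i=1}^r p_i |ψ_i⟩⟨ψ_i| (p_i > 0) with {|ψ_i⟩} part of an orthonormal basis of an Ω-dimensional space, let σ^(1) = {|ψ_i⟩⟨ψ_i|}_{i=1}^Ω, and let σ^(2) = {|φ_j⟩⟨φ_j|} where |φ_j⟩ = F|ψ_j⟩ with F the discrete Fourier transform F|x⟩ = Ω^{-1/2} Σ_y e^{2πixy/Ω}|y⟩ in the basis {|ψ_i⟩}. Then S = {ρ, σ^(1), σ^(2)} is medium consistent and has exactly rΩ histories with nonzero probability. -/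
open Matrix BigOperators
open scoped ComplexOrder

/- ### Auxiliary lemmas -/

lemma aux_vmv_mul {Ω : ℕ} (a b c d : Fin Ω → ℂ) :
    vecMulVec a b * vecMulVec c d = (b ⬝ᵥ c) • vecMulVec a d := by
  ext i j
  simp only [Matrix.mul_apply, vecMulVec_apply, Matrix.smul_apply, dotProduct,
    smul_eq_mul, Finset.sum_mul]
  apply Finset.sum_congr rfl
  intros; ring

lemma aux_trace_vmv {Ω : ℕ} (a b : Fin Ω → ℂ) : (vecMulVec a b).trace = b ⬝ᵥ a := by
  simp [Matrix.trace, vecMulVec_apply, dotProduct, mul_comm]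

lemma aux_trace5 {Ω : ℕ} (a b c d e : Fin Ω → ℂ) :
    (ketbra a * ketbra b * ketbra c * ketbra d * ketbra e).trace
      = (star a ⬝ᵥ b) * (star b ⬝ᵥ c) * (star c ⬝ᵥ d) * (star d ⬝ᵥ e) * (star e ⬝ᵥ a) := by
  simp only [ketbra, aux_vmv_mul, smul_mul_assoc, trace_smul, smul_eq_mul, aux_trace_vmv]
  ring

lemma aux_dp_sum {Ω n : ℕ} (v : Fin Ω → ℂ) (w : Fin n → Fin Ω → ℂ) :
    v ⬝ᵥ (∑ i, w i) = ∑ i, v ⬝ᵥ w i := by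
  simp only [dotProduct, Finset.sum_apply, Finset.mul_sum]
  rw [Finset.sum_comm]

lemma aux_dot_psi_phi {Ω : ℕ} (ψ φ : Fin Ω → Fin Ω → ℂ)
    (hψ : ∀ i j, star (ψ i) ⬝ᵥ ψ j = if i = j then 1 else 0)
    (hφ : ∀ j : Fin Ω,
      φ j = ((Real.sqrt Ω : ℝ) : ℂ)⁻¹ •
        ∑ y : Fin Ω,
          Complex.exp (2 * Real.pi * Complex.I * j.val * y.val / Ω) • ψ y)
    (i j : Fin Ω) :
    star (ψ i) ⬝ᵥ φ j = ((Real.sqrt Ω : ℝ) : ℂ)⁻¹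
      * Complex.exp (2 * Real.pi * Complex.I * j.val * i.val / Ω) := by
  rw [hφ]
  rw [dotProduct_smul, aux_dp_sum]
  simp only [dotProduct_smul, hψ, smul_eq_mul, mul_ite, mul_one, mul_zero,
    Finset.sum_ite_eq, Finset.mem_univ, if_true]

lemma aux_root_sum {Ω : ℕ} (hΩ : 0 < Ω) (j l : Fin Ω) (hjl : j ≠ l) :
    ∑ y : Fin Ω, Complex.exp (2 * Real.pi * Complex.I * (((l:ℕ):ℂ) - ((j:ℕ):ℂ)) * ((y:ℕ):ℂ) / Ω) = 0 := by
  have hΩ' : (Ω:ℂ) ≠ 0 := Nat.cast_ne_zero.mpr hΩ.ne'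
  set B : ℂ := 2 * Real.pi * Complex.I * (((l:ℕ):ℂ) - ((j:ℕ):ℂ)) / Ω with hB
  have hterm : ∀ y : Fin Ω, Complex.exp (2 * Real.pi * Complex.I * (((l:ℕ):ℂ) - ((j:ℕ):ℂ)) * ((y:ℕ):ℂ) / Ω)
      = Complex.exp B ^ (y : ℕ) := by
    intro y
    rw [← Complex.exp_nat_mul]
    congr 1
    rw [hB]; ring
  rw [Finset.sum_congr rfl fun y _ => hterm y,
    Fin.sum_univ_eq_sum_range (fun y => Complex.exp B ^ y) Ω]
  have h2 : (2 * (Real.pi:ℂ) * Complex.I) ≠ 0 := by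
    simp [Real.pi_ne_zero, Complex.I_ne_zero, Complex.ofReal_ne_zero]
  have hz1 : Complex.exp B ≠ 1 := by
    intro h1
    obtain ⟨n, hn⟩ := Complex.exp_eq_one_iff.mp h1
    rw [hB] at hn
    have hC : (((l:ℕ):ℂ) - ((j:ℕ):ℂ)) = n * Ω := by
      apply mul_left_cancel₀ h2
      field_simp at hn
      linear_combination (2 * Real.pi * Complex.I) * hn
    have hz : ((l:ℕ):ℤ) - ((j:ℕ):ℤ) = n * Ω := by exact_mod_cast hC
    have hln : ((l:ℕ):ℤ) < Ω := by exact_mod_cast l.isLt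
    have hjn : ((j:ℕ):ℤ) < Ω := by exact_mod_cast j.isLt
    have hl0 : (0:ℤ) ≤ ((l:ℕ):ℤ) := by positivity
    have hj0 : (0:ℤ) ≤ ((j:ℕ):ℤ) := by positivity
    have hne : ((l:ℕ):ℤ) ≠ ((j:ℕ):ℤ) := by
      simpa [Fin.ext_iff, Int.natCast_inj, eq_comm] using hjl
    have hΩz : (0:ℤ) < Ω := by exact_mod_cast hΩ
    rcases lt_trichotomy n 0 with h | h | h
    · nlinarith [mul_le_mul_of_nonneg_right (show n + 1 ≤ 0 by omega) hΩz.le]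
    · rw [h] at hz; simp at hz; omega
    · nlinarith [mul_le_mul_of_nonneg_right (show 1 ≤ n by omega) hΩz.le]
  rw [geom_sum_eq hz1]
  have hpow : Complex.exp B ^ Ω = 1 := by
    rw [← Complex.exp_nat_mul]
    have hE : (Ω:ℂ) * B = ((((l:ℕ):ℤ) - ((j:ℕ):ℤ) : ℤ) : ℂ) * (2 * Real.pi * Complex.I) := by
      rw [hB]; push_cast; field_simp
    rw [hE]
    exact Complex.exp_int_mul_two_pi_mul_I _
  rw [hpow]
  simp

lemma aux_csq {Ω : ℕ} (hΩ : 0 < Ω) :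
    (((Real.sqrt Ω : ℝ):ℂ))⁻¹ * (((Real.sqrt Ω : ℝ):ℂ))⁻¹ = ((Ω:ℕ):ℂ)⁻¹ := by
  rw [← mul_inv, ← Complex.ofReal_mul, Real.mul_self_sqrt (by positivity)]
  push_cast
  ring

lemma aux_dot_phi_psi {Ω : ℕ} (ψ φ : Fin Ω → Fin Ω → ℂ)
    (hψ : ∀ i j, star (ψ i) ⬝ᵥ ψ j = if i = j then 1 else 0)
    (hφ : ∀ j : Fin Ω,
      φ j = ((Real.sqrt Ω : ℝ) : ℂ)⁻¹ •
        ∑ y : Fin Ω,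
          Complex.exp (2 * Real.pi * Complex.I * j.val * y.val / Ω) • ψ y)
    (j i : Fin Ω) :
    star (φ j) ⬝ᵥ ψ i = ((Real.sqrt Ω : ℝ) : ℂ)⁻¹
      * Complex.exp (-(2 * Real.pi * Complex.I * j.val * i.val / Ω)) := by
  rw [Matrix.star_dotProduct, aux_dot_psi_phi ψ φ hψ hφ, star_mul']
  congr 1
  · simp [RCLike.star_def, Complex.conj_ofReal]
  · rw [RCLike.star_def, ← Complex.exp_conj]
    congr 1
    simp [map_div₀, Complex.conj_I, map_ofNat]
    ring

lemma aux_dot_phi_phi {Ω : ℕ} (hΩ : 0 < Ω) (ψ φ : Fin Ω → Fin Ω → ℂ)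
    (hψ : ∀ i j, star (ψ i) ⬝ᵥ ψ j = if i = j then 1 else 0)
    (hφ : ∀ j : Fin Ω,
      φ j = ((Real.sqrt Ω : ℝ) : ℂ)⁻¹ •
        ∑ y : Fin Ω,
          Complex.exp (2 * Real.pi * Complex.I * j.val * y.val / Ω) • ψ y)
    (j l : Fin Ω) :
    star (φ j) ⬝ᵥ φ l = if j = l then 1 else 0 := by
  conv_lhs => rw [hφ l]
  rw [dotProduct_smul, aux_dp_sum]
  simp only [dotProduct_smul, aux_dot_phi_psi ψ φ hψ hφ, smul_eq_mul]
  have hterm : ∀ y : Fin Ω,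
      Complex.exp (2 * Real.pi * Complex.I * l.val * y.val / Ω) *
        (((Real.sqrt Ω : ℝ) : ℂ)⁻¹ * Complex.exp (-(2 * Real.pi * Complex.I * j.val * y.val / Ω)))
      = ((Real.sqrt Ω : ℝ) : ℂ)⁻¹ *
        Complex.exp (2 * Real.pi * Complex.I * (((l:ℕ):ℂ) - ((j:ℕ):ℂ)) * ((y:ℕ):ℂ) / Ω) := by
    intro y
    rw [mul_comm, mul_assoc]
    congr 1
    rw [← Complex.exp_add]
    congr 1
    ring
  rw [Finset.sum_congr rfl fun y _ => hterm y, ← Finset.mul_sum, ← mul_assoc, aux_csq hΩ]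
  by_cases hjl : j = l
  · subst hjl
    simp only [sub_self, mul_zero, zero_mul, zero_div, Complex.exp_zero]
    simp [Finset.card_univ, Nat.cast_ne_zero.mpr hΩ.ne']
  · rw [aux_root_sum hΩ j l (Ne.symm (fun h => hjl h.symm))]
    simp [hjl]

/-- explicit family achieving the Diósi bound.  With
`ρ = Σ_{i<r} p_i |ψ_i⟩⟨ψ_i|` (`p_i > 0`, `{ψ_i}` part of an orthonormal basis of an
`Ω`-dimensional space), `σ⁽¹⁾ = {|ψ_i⟩⟨ψ_i|}_{i<Ω}`, and `σ⁽²⁾ = {|φ_j⟩⟨φ_j|}` with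
`φ_j = F ψ_j` the discrete Fourier transform in the basis `{ψ_i}`, the two-event
family is medium consistent and has exactly `r Ω` histories with nonzero
probability. -/
theorem fourier_family_attains_diosi_bound {Ω r : ℕ} (hΩ : 0 < Ω) (hr : r ≤ Ω)
    (ψ : Fin Ω → (Fin Ω → ℂ))
    (hψ : ∀ i j, star (ψ i) ⬝ᵥ ψ j = if i = j then 1 else 0)
    (p : Fin r → ℝ) (hp : ∀ i, 0 < p i) (hpsum : ∑ i, p i = 1)
    (ρ : Matrix (Fin Ω) (Fin Ω) ℂ)
    (hρ : ρ = ∑ i : Fin r, ((p i : ℝ) : ℂ) • ketbra (ψ (Fin.castLE hr i)))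
    (φ : Fin Ω → (Fin Ω → ℂ))
    (hφ : ∀ j : Fin Ω,
      φ j = ((Real.sqrt Ω : ℝ) : ℂ)⁻¹ •
        ∑ y : Fin Ω,
          Complex.exp (2 * Real.pi * Complex.I * j.val * y.val / Ω) • ψ y) :
    (∀ i j k l : Fin Ω,
      (ketbra (φ l) * ketbra (ψ k) * ρ * ketbra (ψ i) * ketbra (φ j)).trace
        = if i = k ∧ j = l then
            (ketbra (φ j) * ketbra (ψ i) * ρ * ketbra (ψ i) * ketbra (φ j)).trace
          else 0) ∧
    Set.ncard {ij : Fin Ω × Fin Ω |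
        (ketbra (φ ij.2) * ketbra (ψ ij.1) * ρ * ketbra (ψ ij.1)
          * ketbra (φ ij.2)).trace ≠ 0}
      = r * Ω := by
  have hφφ := aux_dot_phi_phi hΩ ψ φ hψ hφ
  have hΩc : ((Ω:ℕ):ℂ) ≠ 0 := Nat.cast_ne_zero.mpr hΩ.ne'
  -- product of the two φ/ψ overlaps
  have hAne : ∀ i j : Fin Ω,
      (star (φ j) ⬝ᵥ ψ i) * (star (ψ i) ⬝ᵥ φ j) = ((Ω:ℕ):ℂ)⁻¹ := by
    intro i j
    rw [aux_dot_phi_psi ψ φ hψ hφ, aux_dot_psi_phi ψ φ hψ hφ]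
    rw [show (((Real.sqrt Ω : ℝ):ℂ)⁻¹ * Complex.exp (-(2 * Real.pi * Complex.I * j.val * i.val / Ω)))
        * (((Real.sqrt Ω : ℝ):ℂ)⁻¹ * Complex.exp (2 * Real.pi * Complex.I * j.val * i.val / Ω))
      = ((Real.sqrt Ω : ℝ):ℂ)⁻¹ * ((Real.sqrt Ω : ℝ):ℂ)⁻¹ *
        (Complex.exp (-(2 * Real.pi * Complex.I * j.val * i.val / Ω)) *
          Complex.exp (2 * Real.pi * Complex.I * j.val * i.val / Ω)) from by ring]
    rw [← Complex.exp_add, aux_csq hΩ]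
    simp
  -- expansion of the five-fold trace
  have hD : ∀ i j k l : Fin Ω,
      (ketbra (φ l) * ketbra (ψ k) * ρ * ketbra (ψ i) * ketbra (φ j)).trace
      = ∑ m : Fin r, ((p m : ℝ):ℂ) *
          ((star (φ l) ⬝ᵥ ψ k) * (star (ψ k) ⬝ᵥ ψ (Fin.castLE hr m)) *
           (star (ψ (Fin.castLE hr m)) ⬝ᵥ ψ i) * (star (ψ i) ⬝ᵥ φ j) *
           (star (φ j) ⬝ᵥ φ l)) := by
    intro i j k l
    rw [hρ]
    simp only [Finset.mul_sum, Finset.sum_mul, Matrix.mul_smul, Matrix.smul_mul,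
      trace_sum, trace_smul, smul_eq_mul]
    exact Finset.sum_congr rfl fun m _ => by rw [aux_trace5]
  -- diagonal value
  have hDiag : ∀ i j : Fin Ω,
      (ketbra (φ j) * ketbra (ψ i) * ρ * ketbra (ψ i) * ketbra (φ j)).trace
      = (if h : (i:ℕ) < r then ((p ⟨(i:ℕ), h⟩ : ℝ):ℂ) else 0) * ((Ω:ℕ):ℂ)⁻¹ := by
    intro i j
    rw [hD i j i j]
    have hterm : ∀ m : Fin r,
        ((p m : ℝ):ℂ) *
          ((star (φ j) ⬝ᵥ ψ i) * (star (ψ i) ⬝ᵥ ψ (Fin.castLE hr m)) *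
           (star (ψ (Fin.castLE hr m)) ⬝ᵥ ψ i) * (star (ψ i) ⬝ᵥ φ j) *
           (star (φ j) ⬝ᵥ φ j))
        = if Fin.castLE hr m = i then ((p m : ℝ):ℂ) * ((Ω:ℕ):ℂ)⁻¹ else 0 := by
      intro m
      rw [hψ i (Fin.castLE hr m), hψ (Fin.castLE hr m) i, hφφ j j, if_pos rfl]
      by_cases hm : Fin.castLE hr m = i
      · rw [if_pos hm, if_pos hm.symm, if_pos hm,
          show ((p m : ℝ):ℂ) * ((star (φ j) ⬝ᵥ ψ i) * 1 * 1 * (star (ψ i) ⬝ᵥ φ j) * 1)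
            = ((p m : ℝ):ℂ) * ((star (φ j) ⬝ᵥ ψ i) * (star (ψ i) ⬝ᵥ φ j)) from by ring,
          hAne i j]
      · rw [if_neg hm, if_neg (fun h => hm h.symm), if_neg hm]
        ring
    rw [Finset.sum_congr rfl fun m _ => hterm m]
    by_cases hi : (i:ℕ) < r
    · have hcond : ∀ m : Fin r, (Fin.castLE hr m = i) ↔ m = ⟨(i:ℕ), hi⟩ := by
        intro m
        constructor
        · intro h; apply Fin.ext; simpa [Fin.ext_iff] using h
        · intro h; subst h; apply Fin.ext; simp
      simp only [hcond]
      rw [Finset.sum_ite_eq' Finset.univ (⟨(i:ℕ), hi⟩ : Fin r)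
        (fun m => ((p m : ℝ):ℂ) * ((Ω:ℕ):ℂ)⁻¹)]
      simp [hi]
    · rw [dif_neg hi, zero_mul]
      apply Finset.sum_eq_zero
      intro m _
      rw [if_neg]
      intro h
      exact hi (by simpa [Fin.ext_iff] using h ▸ m.isLt)
  -- the two parts
  constructor
  · intro i j k l
    by_cases h : i = k ∧ j = l
    · obtain ⟨h1, h2⟩ := h
      subst h1; subst h2
      simp
    · rw [if_neg h, hD i j k l]
      apply Finset.sum_eq_zero
      intro m _
      by_cases hjl : j = l
      · have hik : ¬ i = k := fun hik => h ⟨hik, hjl⟩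
        rw [hψ k (Fin.castLE hr m), hψ (Fin.castLE hr m) i]
        by_cases h1 : k = Fin.castLE hr m
        · rw [if_pos h1, if_neg (fun h2 => hik (h1 ▸ h2).symm)]
          ring
        · rw [if_neg h1]
          ring
      · rw [hφφ j l, if_neg hjl]
        ring
  · have hset : {ij : Fin Ω × Fin Ω |
        (ketbra (φ ij.2) * ketbra (ψ ij.1) * ρ * ketbra (ψ ij.1)
          * ketbra (φ ij.2)).trace ≠ 0}
        = ↑(Finset.univ.filter fun ij : Fin Ω × Fin Ω => (ij.1 : ℕ) < r) := by
      ext ⟨i, j⟩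
      simp only [Set.mem_setOf_eq, Finset.coe_filter, Finset.mem_univ, true_and,
        hDiag i j]
      constructor
      · intro h
        by_contra hi
        rw [dif_neg hi, zero_mul] at h
        exact h rfl
      · intro hi
        rw [dif_pos hi]
        exact mul_ne_zero (Complex.ofReal_ne_zero.mpr (hp _).ne') (inv_ne_zero hΩc)
    rw [hset, Set.ncard_coe_finset, ← Finset.univ_product_univ,
      Finset.filter_product_left (fun i : Fin Ω => (i : ℕ) < r), Finset.card_product,
      Finset.card_univ, Fintype.card_fin]
    congr 1
    rw [Finset.card_filter, Fin.sum_univ_eq_sum_range (fun y => if y < r then 1 else 0) Ω,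
      ← Finset.card_filter]
    rw [show (Finset.range Ω).filter (fun y => y < r) = Finset.range r from by
      ext x; simp; omega]
    exact Finset.card_range r
end

section
/- Purification argument bounding weakly consistent histories: let ρ have rank r on an Ω-dimensional space, |Ψ⟩ = Σ_{i=1}^r √p_i |ψ_i⟩⊗|ψ'_i⟩ a purification in H⊗E with dim E = r, and define |Ψ_α⟩ = (C_α ⊗ 1)|Ψ⟩ for each history α. If the family is weakly consistent, then Re⟨Ψ_α|Ψ_β⟩ = δ_{αβ} Pr(α); hence the nonzero vectors |Ψ_α⟩ form a set of vectors in a complex space of dimension rΩ with mutually 'real-orthogonal' inner products, and therefore there are at most 2rΩ of them. -/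
open Matrix BigOperators
open scoped ComplexOrder

open Kronecker

/-- The time-ordered history operator acting on states,
`C_α = P^(n)_{α_n} ⋯ P^(1)_{α_1}`. -/
noncomputable def revHistOp {Ω n : ℕ} {m : Fin n → ℕ}
    (P : ∀ j : Fin n, Fin (m j) → Matrix (Fin Ω) (Fin Ω) ℂ)
    (α : ∀ j, Fin (m j)) : Matrix (Fin Ω) (Fin Ω) ℂ :=
  ((List.finRange n).reverse.map fun j => P j (α j)).prod

/- ---------------- auxiliary lemmas ---------------- -/

lemma kron_conjT {a b c d : Type*} [Fintype a] [Fintype b] [Fintype c] [Fintype d]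
    (A : Matrix a b ℂ) (B : Matrix c d ℂ) : (A ⊗ₖ B)ᴴ = Aᴴ ⊗ₖ Bᴴ := by
  ext ⟨i,j⟩ ⟨k,l⟩
  simp [conjTranspose_apply, kroneckerMap_apply, mul_comm]

lemma inner_kron_trace {Ω r : ℕ} (M : Matrix (Fin Ω) (Fin Ω) ℂ)
    (Ψ : Fin Ω × Fin r → ℂ) (G : Matrix (Fin Ω) (Fin r) ℂ)
    (hG : ∀ x s, G x s = Ψ (x, s)) :
    star Ψ ⬝ᵥ ((M ⊗ₖ (1 : Matrix (Fin r) (Fin r) ℂ)).mulVec Ψ) = (Gᴴ * M * G).trace := by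
  simp only [dotProduct, Matrix.mulVec, Matrix.trace, Matrix.diag, Matrix.mul_apply,
    kroneckerMap_apply, Fintype.sum_prod_type, Matrix.one_apply, conjTranspose_apply,
    Pi.star_apply]
  rw [Finset.sum_comm]
  refine Finset.sum_congr rfl fun s _ => ?_
  simp only [Finset.sum_mul]
  rw [Finset.sum_comm]
  refine Finset.sum_congr rfl fun x _ => ?_
  simp only [mul_ite, mul_one, mul_zero, ite_mul, zero_mul]
  rw [Finset.mul_sum]
  refine Finset.sum_congr rfl fun y _ => ?_
  rw [Finset.sum_ite_eq Finset.univ s, if_pos (Finset.mem_univ s), hG, hG]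
  ring

lemma histOp_conjT {Ω n : ℕ} {m : Fin n → ℕ}
    {P : ∀ j : Fin n, Fin (m j) → Matrix (Fin Ω) (Fin Ω) ℂ}
    (hP1 : ∀ j a, (P j a)ᴴ = P j a) (α : ∀ j, Fin (m j)) :
    (histOp P α)ᴴ = revHistOp P α := by
  unfold histOp revHistOp
  rw [Matrix.conjTranspose_list_prod, List.map_map, ← List.map_reverse]
  congr 1
  refine List.map_congr_left fun j _ => ?_
  exact hP1 j (α j)

lemma revHistOp_conjT {Ω n : ℕ} {m : Fin n → ℕ}
    {P : ∀ j : Fin n, Fin (m j) → Matrix (Fin Ω) (Fin Ω) ℂ}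
    (hP1 : ∀ j a, (P j a)ᴴ = P j a) (α : ∀ j, Fin (m j)) :
    (revHistOp P α)ᴴ = histOp P α := by
  rw [← histOp_conjT hP1 α, Matrix.conjTranspose_conjTranspose]

lemma dot_self_re_pos {N : Type*} [Fintype N] {v : N → ℂ} (hv : v ≠ 0) :
    0 < (star v ⬝ᵥ v).re := by
  have h : (star v ⬝ᵥ v).re = ∑ x, Complex.normSq (v x) := by
    simp only [dotProduct, Pi.star_apply, Complex.re_sum]
    refine Finset.sum_congr rfl fun x _ => ?_
    simp [Complex.normSq_apply, Complex.mul_re]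
  rw [h]
  obtain ⟨x, hx⟩ : ∃ x, v x ≠ 0 := by
    by_contra hc
    push_neg at hc
    exact hv (funext hc)
  exact Finset.sum_pos' (fun y _ => Complex.normSq_nonneg _)
    ⟨x, Finset.mem_univ x, Complex.normSq_pos.2 hx⟩


/-- purification bound on weakly consistent histories.  Let `ρ` have
rank `r` with spectral decomposition `ρ = Σ p_i |ψ_i⟩⟨ψ_i|`, purified as
`|Ψ⟩ = Σ √p_i |ψ_i⟩⊗|ψ'_i⟩` in `H ⊗ E` (`dim E = r`), and set
`|Ψ_α⟩ = (C_α ⊗ 1)|Ψ⟩`.  If the family is weakly consistent, then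
`Re⟨Ψ_α|Ψ_β⟩ = δ_{αβ} Pr(α)`; hence the nonzero `|Ψ_α⟩` are mutually
real-orthogonal vectors of a complex space of dimension `rΩ`, so there are at most
`2 r Ω` of them. -/
theorem purification_weak_bound {Ω n r : ℕ} {m : Fin n → ℕ}
    (p : Fin r → ℝ) (hp : ∀ i, 0 < p i) (hpsum : ∑ i, p i = 1)
    (ψ : Fin r → (Fin Ω → ℂ))
    (hψ : ∀ i j, star (ψ i) ⬝ᵥ ψ j = if i = j then 1 else 0)
    (ψ' : Fin r → (Fin r → ℂ))
    (hψ' : ∀ i j, star (ψ' i) ⬝ᵥ ψ' j = if i = j then 1 else 0)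
    (ρ : Matrix (Fin Ω) (Fin Ω) ℂ)
    (hρ : ρ = ∑ i : Fin r, ((p i : ℝ) : ℂ) • ketbra (ψ i))
    (Ψ : Fin Ω × Fin r → ℂ)
    (hΨ : ∀ x, Ψ x = ∑ i : Fin r,
      ((Real.sqrt (p i) : ℝ) : ℂ) * ψ i x.1 * ψ' i x.2)
    (P : ∀ j : Fin n, Fin (m j) → Matrix (Fin Ω) (Fin Ω) ℂ)
    (hP : IsProjFamily P)
    (Ψb : (∀ j, Fin (m j)) → (Fin Ω × Fin r → ℂ))
    (hΨb : ∀ α, Ψb α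
      = ((revHistOp P α) ⊗ₖ (1 : Matrix (Fin r) (Fin r) ℂ)).mulVec Ψ)
    (hweak : ∀ α β : ∀ j, Fin (m j),
      (coh ρ P α β).re = if α = β then (coh ρ P α α).re else 0) :
    (∀ α β : ∀ j, Fin (m j),
      (star (Ψb α) ⬝ᵥ Ψb β).re
        = if α = β then (coh ρ P α α).re else 0) ∧
    Set.ncard {α : ∀ j, Fin (m j) | Ψb α ≠ 0} ≤ 2 * r * Ω := by
  classical
  obtain ⟨hP1, hP2, hP3⟩ := hP
  -- the matrices Φ, W, G
  set Φ : Matrix (Fin Ω) (Fin r) ℂ :=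
    Matrix.of fun x i => ((Real.sqrt (p i) : ℝ) : ℂ) * ψ i x with hΦ
  set W : Matrix (Fin r) (Fin r) ℂ := Matrix.of fun i s => ψ' i s with hW
  set G : Matrix (Fin Ω) (Fin r) ℂ := Φ * W with hGdef
  have hG : ∀ x s, G x s = Ψ (x, s) := by
    intro x s
    rw [hΨ]
    simp [hGdef, Matrix.mul_apply, hΦ, hW]
  have hWW : W * Wᴴ = 1 := by
    ext i j
    have h := hψ' j i
    simp only [dotProduct, Pi.star_apply] at h
    simp only [Matrix.mul_apply, hW, Matrix.conjTranspose_apply, Matrix.of_apply,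
      Matrix.one_apply]
    calc ∑ s, ψ' i s * star (ψ' j s) = ∑ s, star (ψ' j s) * ψ' i s := by
          simp [mul_comm]
      _ = if j = i then 1 else 0 := h
      _ = if i = j then 1 else 0 := by simp [eq_comm]
  have hGG : G * Gᴴ = ρ := by
    rw [hGdef, Matrix.conjTranspose_mul]
    have hassoc : Φ * W * (Wᴴ * Φᴴ) = Φ * (W * Wᴴ) * Φᴴ := by
      simp only [Matrix.mul_assoc]
    rw [hassoc, hWW, Matrix.mul_one, hρ]
    ext x y
    simp only [Matrix.mul_apply, hΦ, Matrix.of_apply, Matrix.conjTranspose_apply,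
      ketbra, Matrix.sum_apply, Matrix.smul_apply, Matrix.vecMulVec_apply,
      smul_eq_mul, Pi.star_apply]
    refine Finset.sum_congr rfl fun i _ => ?_
    have hq : ((Real.sqrt (p i) : ℝ) : ℂ) * ((Real.sqrt (p i) : ℝ) : ℂ)
        = ((p i : ℝ) : ℂ) := by
      rw [← Complex.ofReal_mul, Real.mul_self_sqrt (hp i).le]
    rw [star_mul', Complex.star_def, Complex.conj_ofReal]
    calc ((Real.sqrt (p i) : ℝ) : ℂ) * ψ i x * (((Real.sqrt (p i) : ℝ) : ℂ) * star (ψ i y))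
        = (((Real.sqrt (p i) : ℝ) : ℂ) * ((Real.sqrt (p i) : ℝ) : ℂ)) * (ψ i x * star (ψ i y)) := by
          ring_nf
      _ = ((p i : ℝ) : ℂ) * (ψ i x * star (ψ i y)) := by rw [hq]
  -- key identity
  have key : ∀ α β, star (Ψb α) ⬝ᵥ Ψb β = coh ρ P β α := by
    intro α β
    rw [hΨb, hΨb, Matrix.star_mulVec, Matrix.dotProduct_mulVec, Matrix.vecMul_vecMul,
      ← Matrix.dotProduct_mulVec]
    rw [kron_conjT, Matrix.conjTranspose_one, ← Matrix.mul_kronecker_mul, Matrix.one_mul,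
      revHistOp_conjT hP1]
    rw [inner_kron_trace _ _ G hG]
    rw [Matrix.trace_mul_cycle, ← Matrix.mul_assoc, hGG]
    unfold coh
    rw [histOp_conjT hP1, Matrix.trace_mul_cycle]
  -- part 1
  have part1 : ∀ α β, (star (Ψb α) ⬝ᵥ Ψb β).re
      = if α = β then (coh ρ P α α).re else 0 := by
    intro α β
    rw [key, hweak β α]
    by_cases h : α = β
    · subst h; simp
    · simp [h, Ne.symm h]
  refine ⟨part1, ?_⟩
  -- part 2
  set T : Set (∀ j, Fin (m j)) := {α | Ψb α ≠ 0} with hT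
  haveI : Fintype ↥T := Fintype.ofFinite ↥T
  have li : LinearIndependent ℝ (fun a : ↥T => Ψb (a : ∀ j, Fin (m j))) := by
    rw [linearIndependent_iff']
    intro s g hsum i hi
    have happ := congrArg (fun w => (star (Ψb (i : ∀ j, Fin (m j))) ⬝ᵥ w).re) hsum
    simp only [dotProduct_zero, Complex.zero_re] at happ
    have hdot : star (Ψb (i : ∀ j, Fin (m j))) ⬝ᵥ (∑ j ∈ s, g j • Ψb (j : ∀ j, Fin (m j)))
        = ∑ j ∈ s, ((g j : ℝ) : ℂ) * (star (Ψb (i : ∀ j, Fin (m j))) ⬝ᵥ Ψb (j : ∀ j, Fin (m j))) := by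
      simp only [dotProduct, Finset.sum_apply, Pi.smul_apply, Complex.real_smul,
        Finset.mul_sum]
      rw [Finset.sum_comm]
      refine Finset.sum_congr rfl fun j _ => Finset.sum_congr rfl fun x _ => by ring
    rw [hdot] at happ
    rw [Complex.re_sum] at happ
    have hterm : ∀ j ∈ s, (((g j : ℝ) : ℂ) * (star (Ψb (i : ∀ j, Fin (m j))) ⬝ᵥ Ψb (j : ∀ j, Fin (m j)))).re
        = g j * (if (i : ∀ j, Fin (m j)) = (j : ∀ j, Fin (m j)) then (coh ρ P (i : ∀ j, Fin (m j)) (i : ∀ j, Fin (m j))).re else 0) := by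
      intro j _
      rw [Complex.mul_re, Complex.ofReal_re, Complex.ofReal_im, zero_mul, sub_zero]
      rw [part1]
    rw [Finset.sum_congr rfl hterm] at happ
    have hsingle : ∑ j ∈ s, g j * (if (i : ∀ j, Fin (m j)) = (j : ∀ j, Fin (m j)) then (coh ρ P (i : ∀ j, Fin (m j)) (i : ∀ j, Fin (m j))).re else 0)
        = g i * (coh ρ P (i : ∀ j, Fin (m j)) (i : ∀ j, Fin (m j))).re := by
      rw [Finset.sum_eq_single_of_mem i hi]
      · simp
      · intro j _ hji
        rw [if_neg (fun hc => hji (Subtype.coe_inj.mp hc.symm)), mul_zero]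
    rw [hsingle] at happ
    have hpos : 0 < (coh ρ P (i : ∀ j, Fin (m j)) (i : ∀ j, Fin (m j))).re := by
      have h1 := part1 (i : ∀ j, Fin (m j)) (i : ∀ j, Fin (m j))
      rw [if_pos rfl] at h1
      rw [← h1]
      exact dot_self_re_pos i.2
    rcases mul_eq_zero.mp happ with h | h
    · exact h
    · exact absurd h (ne_of_gt hpos)
  have hcard : Fintype.card ↥T ≤ Module.finrank ℝ (Fin Ω × Fin r → ℂ) :=
    li.fintype_card_le_finrank
  have hfr : Module.finrank ℝ (Fin Ω × Fin r → ℂ) = Ω * r * 2 := by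
    rw [Module.finrank_pi_fintype]
    simp [Complex.finrank_real_complex, Finset.sum_const]
  calc Set.ncard T = Nat.card ↥T := (Nat.card_coe_set_eq T).symm
    _ = Fintype.card ↥T := Nat.card_eq_fintype_card
    _ ≤ Module.finrank ℝ (Fin Ω × Fin r → ℂ) := hcard
    _ = Ω * r * 2 := hfr
    _ ≤ 2 * r * Ω := by ring_nf; omega
end
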